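/- arXiv:1303.4048 — 12 statements merged into one kernel-verified Lean document; each statement's English description precedes it below -/
import Mathlib

section
/- Let G be a k-uniform hm-bipartite hypergraph on vertex set {1,…,n} with hm-bipartition V = V1 ∪ V2, and let A denote its adjacency tensor. If λ ∈ ℂ is an eigenvalue of A with eigenvector x ∈ ℂ^n, and α ∈ ℂ satisfies α^k = 1, then αλ is also an eigenvalue of A; explicitly, the vector y defined by y_i = α·x_i for i ∈ V1 and y_i = x_i for i ∈ V2 is an eigenvector of A associated with αλ. Hence the set of eigenvalues of the adjacency tensor of an hm-bipartite hypergraph is invariant under multiplication by any k-th root of unity. -/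
/-! Every edge meets `V1` in exactly one vertex, so scaling the coordinates on `V1` by `α`
multiplies each summand `∏_{j ∈ e \ {i}} x_j` of `(A x^{k-1})_i` by `α` if `i ∉ V1` and leaves
it unchanged if `i ∈ V1`. In the latter case the factor `α` of the new eigenvalue is absorbed
by `(α x_i)^{k-1} = α^{-1} x_i^{k-1}`, using `α^k = 1`. -/

open Finset

/-- Degree of vertex `i` in the hypergraph with edge set `E`. -/
def hdeg {n : ℕ} (E : Finset (Finset (Fin n))) (i : Fin n) : ℕ :=
  (E.filter fun e => i ∈ e).card

/-- Adjacency tensor action `(A x^{k-1})_i`. -/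
noncomputable def adjC {n : ℕ} (E : Finset (Finset (Fin n))) (x : Fin n → ℂ) (i : Fin n) : ℂ :=
  ∑ e ∈ E.filter (fun e => i ∈ e), ∏ j ∈ e.erase i, x j

section

variable {ι M : Type*} [DecidableEq ι]

def scaleOn [Mul M] (s : Finset ι) (a : M) (x : ι → M) : ι → M :=
  fun i => if i ∈ s then a * x i else x i

theorem prod_scaleOn [CommMonoid M] (s t : Finset ι) (a : M) (x : ι → M) :
    ∏ j ∈ t, scaleOn s a x j = a ^ (t ∩ s).card * ∏ j ∈ t, x j := by
  have hsplit : ∀ j, scaleOn s a x j = (if j ∈ s then a else 1) * x j := fun j => by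
    unfold scaleOn; split_ifs <;> simp
  simp_rw [hsplit, prod_mul_distrib, prod_ite_mem, prod_const]

theorem scaleOn_ne_zero [MulZeroClass M] [NoZeroDivisors M] {s : Finset ι} {a : M}
    {x : ι → M} (ha : a ≠ 0) (hx : x ≠ 0) : scaleOn s a x ≠ 0 := by
  obtain ⟨i, hi⟩ := Function.ne_iff.mp hx
  refine Function.ne_iff.mpr ⟨i, ?_⟩
  unfold scaleOn
  split_ifs
  · exact mul_ne_zero ha hi
  · exact hi

theorem card_erase_inter_of_card_inter_eq_one {e s : Finset ι} (he : (e ∩ s).card = 1)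
    {i : ι} (hi : i ∈ e) : (e.erase i ∩ s).card = if i ∈ s then 0 else 1 := by
  rw [erase_inter]
  split_ifs with his
  · rw [card_erase_of_mem (mem_inter.mpr ⟨hi, his⟩), he]
  · rw [erase_eq_of_notMem (fun h => his (mem_inter.mp h).2), he]

end

theorem adjC_scaleOn {n : ℕ} {E : Finset (Finset (Fin n))} {V1 : Finset (Fin n)}
    (hbip : ∀ e ∈ E, (e ∩ V1).card = 1) (α : ℂ) (x : Fin n → ℂ) (i : Fin n) :
    adjC E (scaleOn V1 α x) i = (if i ∈ V1 then 1 else α) * adjC E x i := by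
  rw [adjC, adjC, mul_sum]
  refine sum_congr rfl fun e he => ?_
  obtain ⟨heE, hie⟩ := mem_filter.mp he
  rw [prod_scaleOn, card_erase_inter_of_card_inter_eq_one (hbip e heE) hie]
  split_ifs <;> simp

theorem stmt_0_general {n k : ℕ} (hk : 3 ≤ k)
    (E : Finset (Finset (Fin n)))
    (V1 : Finset (Fin n))
    (hbip : ∀ e ∈ E, (e ∩ V1).card = 1)
    (lam : ℂ) (x : Fin n → ℂ) (hx : x ≠ 0)
    (heig : ∀ i, adjC E x i = lam * x i ^ (k - 1))
    (α : ℂ) (hα : α ^ k = 1) :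
    (fun i => if i ∈ V1 then α * x i else x i) ≠ 0 ∧
      (∀ i, adjC E (fun i => if i ∈ V1 then α * x i else x i) i =
        (α * lam) * (if i ∈ V1 then α * x i else x i) ^ (k - 1)) := by
  obtain ⟨m, rfl⟩ : ∃ m, k = m + 1 := ⟨k - 1, by omega⟩
  have hα0 : α ≠ 0 := by rintro rfl; simp at hα
  refine ⟨scaleOn_ne_zero hα0 hx, fun i => ?_⟩
  change adjC E (scaleOn V1 α x) i = _
  rw [adjC_scaleOn hbip, heig, Nat.add_sub_cancel]
  split_ifs
  · linear_combination (-(lam * x i ^ m)) * hα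
  · ring

theorem stmt_0 {n k : ℕ} (hk : 3 ≤ k) (hn : k ≤ n)
    (E : Finset (Finset (Fin n))) (hE : ∀ e ∈ E, e.card = k)
    (V1 : Finset (Fin n)) (hV1 : V1.Nonempty) (hV2 : V1ᶜ.Nonempty)
    (hbip : ∀ e ∈ E, (e ∩ V1).card = 1)
    (lam : ℂ) (x : Fin n → ℂ) (hx : x ≠ 0)
    (heig : ∀ i, adjC E x i = lam * x i ^ (k - 1))
    (α : ℂ) (hα : α ^ k = 1) :
    (fun i => if i ∈ V1 then α * x i else x i) ≠ 0 ∧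
      (∀ i, adjC E (fun i => if i ∈ V1 then α * x i else x i) i =
        (α * lam) * (if i ∈ V1 then α * x i else x i) ^ (k - 1)) :=
  stmt_0_general hk E V1 hbip lam x hx heig α hα
end

section
/- Let k be even and let G be a k-uniform hm-bipartite hypergraph on {1,…,n} with hm-bipartition V = V1 ∪ V2. Then for every λ ∈ ℂ and x ∈ ℂ^n, x is an eigenvector of the Laplacian tensor D − A associated with λ if and only if the vector y defined by y_i = x_i for i ∈ V1 and y_i = −x_i for i ∈ V2 is an eigenvector of the signless Laplacian tensor D + A associated with λ. In particular, λ is an eigenvalue of D − A if and only if λ is an eigenvalue of D + A. -/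
open Finset

/-- Laplacian tensor action `((D - A) x^{k-1})_i` over ℂ. -/
noncomputable def lapC (k : ℕ) {n : ℕ} (E : Finset (Finset (Fin n)))
    (x : Fin n → ℂ) (i : Fin n) : ℂ :=
  (hdeg E i : ℂ) * x i ^ (k - 1) -
    ∑ e ∈ E.filter (fun e => i ∈ e), ∏ j ∈ e.erase i, x j

/-- Signless Laplacian tensor action `((D + A) x^{k-1})_i` over ℂ. -/
noncomputable def slapC (k : ℕ) {n : ℕ} (E : Finset (Finset (Fin n)))
    (x : Fin n → ℂ) (i : Fin n) : ℂ :=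
  (hdeg E i : ℂ) * x i ^ (k - 1) +
    ∑ e ∈ E.filter (fun e => i ∈ e), ∏ j ∈ e.erase i, x j

/-- Laplacian tensor action `((D - A) x^{k-1})_i` over ℝ. -/
noncomputable def lapR (k : ℕ) {n : ℕ} (E : Finset (Finset (Fin n)))
    (x : Fin n → ℝ) (i : Fin n) : ℝ :=
  (hdeg E i : ℝ) * x i ^ (k - 1) -
    ∑ e ∈ E.filter (fun e => i ∈ e), ∏ j ∈ e.erase i, x j

/-- Signless Laplacian tensor action `((D + A) x^{k-1})_i` over ℝ. -/
noncomputable def slapR (k : ℕ) {n : ℕ} (E : Finset (Finset (Fin n)))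
    (x : Fin n → ℝ) (i : Fin n) : ℝ :=
  (hdeg E i : ℝ) * x i ^ (k - 1) +
    ∑ e ∈ E.filter (fun e => i ∈ e), ∏ j ∈ e.erase i, x j

/-- The hypergraph with edge set `E` is connected: every pair of distinct vertices is
joined by a chain of edges with consecutive edges intersecting. -/
def HConnected {n : ℕ} (E : Finset (Finset (Fin n))) : Prop :=
  ∀ i j : Fin n, i ≠ j → ∃ m : ℕ, ∃ es : Fin (m + 1) → Finset (Fin n),
    (∀ r, es r ∈ E) ∧ i ∈ es 0 ∧ j ∈ es (Fin.last m) ∧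
    ∀ r : Fin m, (es r.castSucc ∩ es r.succ).Nonempty

lemma sign_prod_aux {n : ℕ} (V1 : Finset (Fin n)) (x : Fin n → ℂ) (s : Finset (Fin n)) :
    ∏ j ∈ s, (if j ∈ V1 then x j else -x j) =
      (-1 : ℂ) ^ (s.filter (fun j => j ∉ V1)).card * ∏ j ∈ s, x j := by
  have h : ∀ j ∈ s, (if j ∈ V1 then x j else -x j) =
      (if j ∈ V1 then (1:ℂ) else -1) * x j := by
    intro j _; split <;> ring
  rw [Finset.prod_congr rfl h, Finset.prod_mul_distrib, Finset.prod_ite,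
    Finset.prod_const_one, Finset.prod_const, one_mul]

lemma erase_filter_card {n k : ℕ} (hk : 3 ≤ k) (V1 : Finset (Fin n))
    (e : Finset (Fin n)) (hek : e.card = k) (he1 : (e ∩ V1).card = 1)
    (i : Fin n) (hi : i ∈ e) :
    ((e.erase i).filter (fun j => j ∉ V1)).card =
      if i ∈ V1 then k - 1 else k - 2 := by
  have hcard : ((e.erase i).filter (fun j => j ∈ V1)).card
      + ((e.erase i).filter (fun j => j ∉ V1)).card = (e.erase i).card :=
    Finset.card_filter_add_card_filter_not (fun j => j ∈ V1)
  have herase : (e.erase i).card = k - 1 := by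
    rw [Finset.card_erase_of_mem hi, hek]
  have hfe : (e.erase i).filter (fun j => j ∈ V1) = (e ∩ V1).erase i := by
    ext j; simp [Finset.mem_erase, Finset.mem_filter, Finset.mem_inter, and_comm, and_assoc]
    tauto
  by_cases hiV : i ∈ V1
  · have : e ∩ V1 = {i} := by
      rw [Finset.card_eq_one] at he1
      obtain ⟨a, ha⟩ := he1
      have : i ∈ e ∩ V1 := Finset.mem_inter.2 ⟨hi, hiV⟩
      rw [ha] at this ⊢
      simp at this; subst this; rfl
    have h2 : ((e.erase i).filter (fun j => j ∈ V1)).card = 0 := by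
      rw [hfe, this]; simp
    simp only [hiV, if_true]
    omega
  · have h2 : ((e.erase i).filter (fun j => j ∈ V1)).card = 1 := by
      rw [hfe, Finset.erase_eq_of_notMem, he1]
      simp [hiV]
    simp only [hiV, if_false]
    omega

theorem stmt_1 {n k : ℕ} (hk : 3 ≤ k) (hn : k ≤ n) (hkeven : Even k)
    (E : Finset (Finset (Fin n))) (hE : ∀ e ∈ E, e.card = k)
    (V1 : Finset (Fin n)) (hV1 : V1.Nonempty) (hV2 : V1ᶜ.Nonempty)
    (hbip : ∀ e ∈ E, (e ∩ V1).card = 1)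
    (lam : ℂ) (x : Fin n → ℂ) :
    (x ≠ 0 ∧ ∀ i, lapC k E x i = lam * x i ^ (k - 1)) ↔
      ((fun i => if i ∈ V1 then x i else -x i) ≠ 0 ∧
        ∀ i, slapC k E (fun i => if i ∈ V1 then x i else -x i) i =
          lam * (if i ∈ V1 then x i else -x i) ^ (k - 1)) := by
  set y : Fin n → ℂ := fun i => if i ∈ V1 then x i else -x i with hy
  have hkm1 : Odd (k - 1) := Nat.Even.sub_odd (by omega) hkeven odd_one
  have hpt : ∀ i, y i = 0 ↔ x i = 0 := by
    intro i; by_cases hiV : i ∈ V1 <;> simp [hy, hiV]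
  have hne : x ≠ 0 ↔ y ≠ 0 := by
    constructor
    · intro h hc; apply h; funext i; exact (hpt i).1 (congrFun hc i)
    · intro h hc; apply h; funext i; exact (hpt i).2 (congrFun hc i)
  have key : ∀ i, (slapC k E y i = lam * y i ^ (k - 1)) ↔
      (lapC k E x i = lam * x i ^ (k - 1)) := by
    intro i
    have hsum : ∑ e ∈ E.filter (fun e => i ∈ e), ∏ j ∈ e.erase i, y j =
        (if i ∈ V1 then -1 else 1) * ∑ e ∈ E.filter (fun e => i ∈ e), ∏ j ∈ e.erase i, x j := by
      rw [Finset.mul_sum]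
      apply Finset.sum_congr rfl
      intro e he
      rw [Finset.mem_filter] at he
      rw [hy, sign_prod_aux, erase_filter_card hk V1 e (hE e he.1) (hbip e he.1) i he.2]
      by_cases hiV : i ∈ V1
      · simp only [hiV, if_true]
        rw [Odd.neg_one_pow hkm1]
      · simp only [hiV, if_false]
        rw [Even.neg_one_pow ((Nat.even_sub (by omega)).2 (by simp [hkeven])), one_mul]
    by_cases hiV : i ∈ V1
    · have hyi : y i = x i := by simp [hy, hiV]
      simp only [slapC, lapC, hsum, hyi, hiV, if_true, neg_one_mul]
      constructor <;> intro h <;> linear_combination h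
    · have hyi : y i = -x i := by simp [hy, hiV]
      have hpow : y i ^ (k - 1) = -(x i ^ (k - 1)) := by
        rw [hyi, Odd.neg_pow hkm1]
      simp only [slapC, lapC, hsum, hpow, hiV, if_false, one_mul]
      constructor <;> intro h <;> linear_combination -h
  constructor
  · rintro ⟨h0, heq⟩
    exact ⟨hne.1 h0, fun i => (key i).2 (heq i)⟩
  · rintro ⟨h0, heq⟩
    exact ⟨hne.2 h0, fun i => (key i).1 (heq i)⟩
end

section
/- Let G be a connected k-uniform hypergraph on {1,…,n} with at least one edge, and let x ∈ ℂ^n be a nonzero vector satisfying ((D−A) x^{k−1})_i = 0 for all i (i.e., x is an eigenvector of the Laplacian tensor associated with the eigenvalue zero). Then x_i ≠ 0 for every i ∈ {1,…,n}, and x_i^k = x_j^k for all i, j; consequently all components of x have the same modulus and every ratio x_i/x_j is a k-th root of unity. -/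
open Finset

/-!
Multiplying the `i`-th eigen-equation by `x i` gives `∑_{e ∋ i} ∏_{j ∈ e} x j = d_i x_i^k`.
At a vertex `i` of maximal modulus every summand has modulus at most `|x_i|^k`, so equality in
the triangle inequality forces every edge product through `i` to equal `x_i^k`. An edge product
of modulus `|x_i|^k` in turn forces every vertex of the edge to have maximal modulus, so by
connectivity all of `x` has the same (nonzero) modulus; then `x_i^k = ∏_{j ∈ e} x j = x_l^k`
for any two vertices `i, l` of an edge `e`, and connectivity again spreads this to all pairs.
-/

theorem eq_of_norm_le_of_sum_eq_card_smul {ι F : Type*} [NormedAddCommGroup F]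
    [InnerProductSpace ℝ F] {s : Finset ι} {z : ι → F} {w : F}
    (hle : ∀ a ∈ s, ‖z a‖ ≤ ‖w‖) (hsum : ∑ a ∈ s, z a = s.card • w) :
    ∀ a ∈ s, z a = w := by
  have hinner_le : ∀ a ∈ s, inner ℝ (z a) w ≤ ‖w‖ ^ 2 := fun a ha =>
    (real_inner_le_norm _ _).trans (by rw [sq]; gcongr; exact hle a ha)
  have hinner_sum : ∑ a ∈ s, inner ℝ (z a) w = ∑ _a ∈ s, ‖w‖ ^ 2 := by
    rw [← sum_inner, hsum, sum_const, ← Nat.cast_smul_eq_nsmul ℝ, real_inner_smul_left,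
      real_inner_self_eq_norm_sq, nsmul_eq_mul]
  intro a ha
  have hinner : inner ℝ (z a) w = ‖w‖ ^ 2 := (sum_eq_sum_iff_of_le hinner_le).mp hinner_sum a ha
  have hsq : ‖z a‖ ^ 2 ≤ ‖w‖ ^ 2 := pow_le_pow_left₀ (norm_nonneg _) (hle a ha) 2
  have hdist : ‖z a - w‖ ^ 2 ≤ 0 := by rw [norm_sub_sq_real, hinner]; linarith
  exact sub_eq_zero.mp (norm_eq_zero.mp (pow_eq_zero_iff two_ne_zero |>.mp
    (le_antisymm hdist (sq_nonneg _))))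

theorem eq_of_le_of_prod_eq_pow_card {ι R : Type*} [DecidableEq ι] [CommSemiring R]
    [LinearOrder R] [IsStrictOrderedRing R] {s : Finset ι} {a : ι → R} {M : R}
    (h0 : ∀ j ∈ s, 0 ≤ a j) (hle : ∀ j ∈ s, a j ≤ M) (hprod : ∏ j ∈ s, a j = M ^ s.card) :
    ∀ j ∈ s, a j = M := by
  intro j hj
  rcases ((h0 j hj).trans (hle j hj)).eq_or_lt with hM | hM
  · exact le_antisymm (hle j hj) (hM ▸ h0 j hj)
  by_contra hne
  have hprod_erase : ∏ i ∈ s.erase j, a i ≤ M ^ (s.erase j).card :=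
    (prod_le_prod (fun i hi => h0 i (mem_of_mem_erase hi))
      fun i hi => hle i (mem_of_mem_erase hi)).trans_eq (prod_const M)
  have hlt : ∏ i ∈ s, a i < M ^ s.card :=
    calc ∏ i ∈ s, a i = a j * ∏ i ∈ s.erase j, a i := (mul_prod_erase s a hj).symm
      _ < M * M ^ (s.erase j).card :=
        mul_lt_mul_of_lt_of_le_of_nonneg_of_pos ((hle j hj).lt_of_ne hne) hprod_erase
          (h0 j hj) (pow_pos hM _)
      _ = M ^ s.card := by rw [← pow_succ', card_erase_add_one hj]
  exact hlt.ne hprod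

theorem HConnected.forall_of_edge_closed {n : ℕ} {E : Finset (Finset (Fin n))}
    (hconn : HConnected E) {P : Fin n → Prop}
    (hP : ∀ e ∈ E, ∀ i ∈ e, ∀ j ∈ e, P i → P j) {i₀ : Fin n} (h₀ : P i₀) (j : Fin n) : P j := by
  rcases eq_or_ne i₀ j with rfl | hne
  · exact h₀
  obtain ⟨m, es, hes, hi₀, hj, hchain⟩ := hconn i₀ j hne
  have hedges : ∀ r, ∀ v ∈ es r, P v := by
    refine Fin.induction (motive := fun r => ∀ v ∈ es r, P v)
      (fun v hv => hP _ (hes 0) i₀ hi₀ v hv h₀) fun r ih v hv => ?_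
    obtain ⟨w, hw⟩ := hchain r
    rw [mem_inter] at hw
    exact hP _ (hes _) w hw.2 v hv (ih w hw.1)
  exact hedges _ j hj

section Laplacian

variable {n k : ℕ} {E : Finset (Finset (Fin n))} {x : Fin n → ℂ} {i : Fin n}

theorem sum_prod_edges_eq_of_lapC_eq_zero (hk : k ≠ 0) (h : lapC k E x i = 0) :
    ∑ e ∈ E.filter (fun e => i ∈ e), ∏ j ∈ e, x j = hdeg E i * x i ^ k := by
  rw [lapC, sub_eq_zero] at h
  calc ∑ e ∈ E.filter (fun e => i ∈ e), ∏ j ∈ e, x j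
      = x i * ∑ e ∈ E.filter (fun e => i ∈ e), ∏ j ∈ e.erase i, x j := by
        rw [mul_sum]
        exact sum_congr rfl fun e he => (mul_prod_erase e x (mem_filter.mp he).2).symm
    _ = hdeg E i * x i ^ k := by
        conv_rhs => rw [← Nat.sub_add_cancel (Nat.one_le_iff_ne_zero.mpr hk)]
        rw [← h, pow_succ]
        ring

variable (hE : ∀ e ∈ E, e.card = k) (heig : lapC k E x i = 0) (hmax : ∀ j, ‖x j‖ ≤ ‖x i‖)
  {e : Finset (Fin n)} (he : e ∈ E) (hie : i ∈ e)
include hE heig hmax he hie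

theorem prod_edge_eq_pow_of_norm_max : ∏ j ∈ e, x j = x i ^ k := by
  have hk : k ≠ 0 := by rw [← hE e he]; exact (card_pos.mpr ⟨i, hie⟩).ne'
  have hle : ∀ e' ∈ E.filter (fun e => i ∈ e), ‖∏ j ∈ e', x j‖ ≤ ‖x i ^ k‖ := fun e' he' => by
    rw [norm_pow, norm_prod, ← hE e' (mem_filter.mp he').1]
    exact (prod_le_prod (fun _ _ => norm_nonneg _) fun j _ => hmax j).trans_eq (prod_const _)
  have hsum : ∑ e' ∈ E.filter (fun e => i ∈ e), ∏ j ∈ e', x j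
      = (E.filter (fun e => i ∈ e)).card • x i ^ k := by
    rw [sum_prod_edges_eq_of_lapC_eq_zero hk heig, nsmul_eq_mul, hdeg]
  exact eq_of_norm_le_of_sum_eq_card_smul hle hsum e (mem_filter.mpr ⟨he, hie⟩)

theorem norm_eq_of_mem_edge_of_norm_max {j : Fin n} (hje : j ∈ e) : ‖x j‖ = ‖x i‖ :=
  eq_of_le_of_prod_eq_pow_card (fun _ _ => norm_nonneg _) (fun j _ => hmax j)
    (by rw [← norm_prod, prod_edge_eq_pow_of_norm_max hE heig hmax he hie, norm_pow, hE e he])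
    j hje

end Laplacian

theorem stmt_2_general {n k : ℕ}
    (E : Finset (Finset (Fin n))) (hE : ∀ e ∈ E, e.card = k)
    (hconn : HConnected E)
    (x : Fin n → ℂ) (hx : x ≠ 0)
    (heig : ∀ i, lapC k E x i = 0) :
    (∀ i, x i ≠ 0) ∧ (∀ i j, x i ^ k = x j ^ k) ∧
      (∀ i j, ‖x i‖ = ‖x j‖) ∧
      (∀ i j, (x i / x j) ^ k = 1) := by
  obtain ⟨i₁, hi₁⟩ := Function.ne_iff.mp hx
  obtain ⟨i₀, -, hi₀⟩ := exists_max_image univ (fun i => ‖x i‖) ⟨i₁, mem_univ _⟩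
  have hnorm : ∀ j, ‖x j‖ = ‖x i₀‖ :=
    hconn.forall_of_edge_closed (P := fun j => ‖x j‖ = ‖x i₀‖)
      (fun e he i hie j hje hi => (norm_eq_of_mem_edge_of_norm_max hE (heig i)
        (fun l => (hi₀ l (mem_univ l)).trans_eq hi.symm) he hie hje).trans hi) rfl
  have hmax : ∀ i j, ‖x j‖ ≤ ‖x i‖ := fun i j => ((hnorm j).trans (hnorm i).symm).le
  have hne : ∀ i, x i ≠ 0 := fun i => norm_ne_zero_iff.mp <| by
    rw [hnorm i, ← hnorm i₁]
    exact norm_ne_zero_iff.mpr hi₁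
  have hpow : ∀ i j, x i ^ k = x j ^ k := fun i =>
    hconn.forall_of_edge_closed (P := fun j => x i ^ k = x j ^ k)
      (fun e he j hje l hle hj => hj.trans <|
        (prod_edge_eq_pow_of_norm_max hE (heig j) (hmax j) he hje).symm.trans
          (prod_edge_eq_pow_of_norm_max hE (heig l) (hmax l) he hle)) rfl
  refine ⟨hne, hpow, fun i j => (hnorm i).trans (hnorm j).symm, fun i j => ?_⟩
  rw [div_pow, hpow i j, div_self (pow_ne_zero k (hne j))]

theorem stmt_2 {n k : ℕ} (hk : 3 ≤ k) (hn : k ≤ n)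
    (E : Finset (Finset (Fin n))) (hE : ∀ e ∈ E, e.card = k)
    (hconn : HConnected E) (hne : E.Nonempty)
    (x : Fin n → ℂ) (hx : x ≠ 0)
    (heig : ∀ i, lapC k E x i = 0) :
    (∀ i, x i ≠ 0) ∧ (∀ i j, x i ^ k = x j ^ k) ∧
      (∀ i j, ‖x i‖ = ‖x j‖) ∧
      (∀ i j, (x i / x j) ^ k = 1) :=
  stmt_2_general E hE hconn x hx heig
end

section
/- Let G be a connected k-uniform hypergraph on {1,…,n} with at least one edge. A nonzero vector x ∈ ℂ^n satisfies ((D−A) x^{k−1})_i = 0 for all i if and only if there exist a nonzero γ ∈ ℂ and integers α_1,…,α_n such that x_i = γ·exp(2πα_i√(−1)/k) for all i, and for every edge e ∈ E the sum Σ_{j∈e} α_j is divisible by k. -/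
open Finset

/-!
At a vertex `i` where `‖x i‖ = M` is maximal, `lapC k E x i = 0` says that the `d_i` numbers
`∏_{j ∈ e \ {i}} x_j`, each of modulus at most `M^(k-1)`, average to `x_i^(k-1)`, which has
modulus exactly `M^(k-1)`; by strict convexity of the disc they all equal `x_i^(k-1)`.
Hence `∏_{j ∈ e} x_j = x_i^k` for every edge `e ∋ i`, which forces every vertex of `e` to have
modulus `M` and the same `k`-th power as `x_i`; by connectivity all `x_j^k` agree, so
`x_j = γ ζ^(α_j)` with `ζ = exp(2π√-1/k)`, and `∏_{j ∈ e} x_j = γ^k` becomes `k ∣ ∑_{j ∈ e} α_j`.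
Conversely these conditions make every `∏_{j ∈ e \ {i}} x_j` equal to `x_i^(k-1)`.
-/

open Complex Real

theorem eq_of_norm_le_of_sum_eq_card_nsmul {E ι : Type*} [NormedAddCommGroup E]
    [InnerProductSpace ℝ E] {s : Finset ι} {z : ι → E} {w : E}
    (hle : ∀ i ∈ s, ‖z i‖ ≤ ‖w‖) (hsum : ∑ i ∈ s, z i = #s • w) :
    ∀ i ∈ s, z i = w := by
  have hzero : ∑ i ∈ s, ‖w - z i‖ ^ 2 ≤ 0 :=
    calc ∑ i ∈ s, ‖w - z i‖ ^ 2
        ≤ ∑ i ∈ s, (2 * ‖w‖ ^ 2 - 2 * inner ℝ w (z i)) := by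
          refine sum_le_sum fun i hi => ?_
          rw [norm_sub_sq_real]
          nlinarith [hle i hi, norm_nonneg (z i)]
      _ = 0 := by
          rw [sum_sub_distrib, ← mul_sum, ← mul_sum, ← inner_sum, hsum,
            ← Nat.cast_smul_eq_nsmul ℝ, real_inner_smul_right, real_inner_self_eq_norm_sq,
            sum_const, nsmul_eq_mul]
          ring
  intro i hi
  have := (sum_eq_zero_iff_of_nonneg fun i _ => sq_nonneg ‖w - z i‖).1
    (le_antisymm hzero (sum_nonneg fun i _ => sq_nonneg _)) i hi
  rw [sq_eq_zero_iff, norm_sub_eq_zero_iff] at this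
  exact this.symm

theorem norm_eq_of_norm_prod_eq_pow_card {R ι : Type*} [NormedCommRing R] [NormOneClass R]
    {s : Finset ι} {f : ι → R} {M : ℝ} (hM : 0 < M) (hle : ∀ i ∈ s, ‖f i‖ ≤ M)
    (hprod : ‖∏ i ∈ s, f i‖ = M ^ #s) {j : ι} (hj : j ∈ s) : ‖f j‖ = M := by
  classical
  refine le_antisymm (hle j hj) (le_of_mul_le_mul_right ?_ (pow_pos hM (#s - 1)))
  calc M * M ^ (#s - 1) = ‖∏ i ∈ s, f i‖ := by
        rw [hprod, ← pow_succ', Nat.sub_add_cancel (card_pos.2 ⟨j, hj⟩)]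
    _ = ‖f j * ∏ i ∈ s.erase j, f i‖ := by rw [mul_prod_erase s f hj]
    _ ≤ ‖f j‖ * ∏ i ∈ s.erase j, ‖f i‖ :=
        (norm_mul_le _ _).trans (mul_le_mul_of_nonneg_left (norm_prod_le _ _) (norm_nonneg _))
    _ ≤ ‖f j‖ * M ^ (#s - 1) := by
        rw [← card_erase_of_mem hj, ← prod_const]
        exact mul_le_mul_of_nonneg_left (prod_le_prod (fun _ _ => norm_nonneg _)
          fun i hi => hle i (mem_of_mem_erase hi)) (norm_nonneg _)

theorem prod_erase_eq_pow_iff {ι M : Type*} [DecidableEq ι] [CommMonoidWithZero M]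
    [IsCancelMulZero M]
    {s : Finset ι} {f : ι → M} {i : ι} (hi : i ∈ s) (hf : f i ≠ 0) :
    ∏ j ∈ s.erase i, f j = f i ^ (#s - 1) ↔ ∏ j ∈ s, f j = f i ^ #s := by
  have hpow : f i ^ #s = f i * f i ^ (#s - 1) := by
    rw [← pow_succ', Nat.sub_add_cancel (card_pos.2 ⟨i, hi⟩)]
  rw [← mul_prod_erase s f hi, hpow, mul_right_inj' hf]

theorem HConnected.forall_of_forall_mem_edge {n : ℕ} {E : Finset (Finset (Fin n))}
    (hconn : HConnected E) {P : Fin n → Prop}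
    (hstep : ∀ e ∈ E, ∀ i ∈ e, P i → ∀ j ∈ e, P j) {i : Fin n} (hi : P i) (j : Fin n) :
    P j := by
  rcases eq_or_ne i j with rfl | hij
  · exact hi
  obtain ⟨m, es, hesE, hi0, hjm, hinter⟩ := hconn i j hij
  suffices ∀ r : Fin (m + 1), ∀ v ∈ es r, P v from this _ j hjm
  intro r
  induction r using Fin.induction with
  | zero => exact hstep _ (hesE 0) i hi0 hi
  | succ r ih =>
    obtain ⟨u, hu⟩ := hinter r
    rw [mem_inter] at hu
    exact hstep _ (hesE _) u hu.2 (ih u hu.1)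

namespace Complex

theorem exp_two_pi_int_mul_I_div (k : ℕ) (a : ℤ) :
    exp (2 * π * a * I / k) = exp (2 * π * I / k) ^ a := by
  rw [← exp_int_mul]
  ring_nf

theorem exp_two_pi_int_mul_I_div_eq_one_iff {k : ℕ} (hk : k ≠ 0) (a : ℤ) :
    exp (2 * π * a * I / k) = 1 ↔ (k : ℤ) ∣ a := by
  rw [exp_two_pi_int_mul_I_div]
  exact (isPrimitiveRoot_exp k hk).zpow_eq_one_iff_dvd a

theorem exp_two_pi_int_mul_I_div_pow {k : ℕ} (hk : k ≠ 0) (a : ℤ) :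
    exp (2 * π * a * I / k) ^ k = 1 := by
  rw [exp_two_pi_int_mul_I_div, ← zpow_natCast, ← zpow_mul, mul_comm a, zpow_mul,
    (isPrimitiveRoot_exp k hk).zpow_eq_one, one_zpow]

theorem prod_mul_exp_two_pi_int_mul_I_div {ι : Type*} (s : Finset ι) (k : ℕ) (γ : ℂ)
    (α : ι → ℤ) :
    ∏ j ∈ s, γ * exp (2 * π * α j * I / k) =
      γ ^ #s * exp (2 * π * (∑ j ∈ s, α j : ℤ) * I / k) := by
  rw [prod_mul_distrib, prod_const, ← exp_sum]
  push_cast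
  rw [mul_sum, sum_mul, sum_div]

theorem exists_eq_mul_exp_of_pow_eq_pow {k : ℕ} (hk : k ≠ 0) {γ z : ℂ} (hγ : γ ≠ 0)
    (h : z ^ k = γ ^ k) : ∃ a : ℤ, z = γ * exp (2 * π * a * I / k) := by
  have : NeZero k := ⟨hk⟩
  obtain ⟨m, -, hm⟩ := (isPrimitiveRoot_exp k hk).eq_pow_of_pow_eq_one (ξ := z / γ)
    (by rw [div_pow, h, div_self (pow_ne_zero k hγ)])
  refine ⟨m, ?_⟩
  rw [exp_two_pi_int_mul_I_div, zpow_natCast, hm, mul_div_cancel₀ _ hγ]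

end Complex

section Laplacian

variable {n k : ℕ} {E : Finset (Finset (Fin n))} {x : Fin n → ℂ} {i : Fin n}

theorem lapC_eq_zero_of_prod_erase (h : ∀ e ∈ E, i ∈ e → ∏ j ∈ e.erase i, x j = x i ^ (k - 1)) :
    lapC k E x i = 0 := by
  rw [lapC, sum_congr rfl fun e he => h e (mem_filter.1 he).1 (mem_filter.1 he).2, sum_const,
    nsmul_eq_mul, hdeg, sub_self]

theorem prod_erase_eq_pow_of_lapC_eq_zero (hE : ∀ e ∈ E, #e = k) (hlap : lapC k E x i = 0)
    (hmax : ∀ j, ‖x j‖ ≤ ‖x i‖) {e : Finset (Fin n)} (he : e ∈ E) (hi : i ∈ e) :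
    ∏ j ∈ e.erase i, x j = x i ^ (k - 1) := by
  refine eq_of_norm_le_of_sum_eq_card_nsmul (s := E.filter (i ∈ ·))
    (z := fun e => ∏ j ∈ e.erase i, x j) (fun e he => ?_) ?_ e (mem_filter.2 ⟨he, hi⟩)
  · obtain ⟨he, hi⟩ := mem_filter.1 he
    rw [norm_prod, norm_pow, ← hE e he, ← card_erase_of_mem hi, ← prod_const]
    exact prod_le_prod (fun _ _ => norm_nonneg _) fun j _ => hmax j
  · rw [nsmul_eq_mul]
    exact (sub_eq_zero.1 hlap).symm

theorem prod_eq_pow_of_lapC_eq_zero (hE : ∀ e ∈ E, #e = k) (hlap : lapC k E x i = 0)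
    (hmax : ∀ j, ‖x j‖ ≤ ‖x i‖) (hx : x i ≠ 0) {e : Finset (Fin n)} (he : e ∈ E)
    (hi : i ∈ e) : ∏ j ∈ e, x j = x i ^ k := by
  rw [← hE e he, ← prod_erase_eq_pow_iff hi hx, hE e he]
  exact prod_erase_eq_pow_of_lapC_eq_zero hE hlap hmax he hi

theorem norm_eq_and_pow_eq_of_lapC_eq_zero (hE : ∀ e ∈ E, #e = k) (hconn : HConnected E)
    (hlap : ∀ i, lapC k E x i = 0) (hmax : ∀ j, ‖x j‖ ≤ ‖x i‖) (hx : x i ≠ 0) (j : Fin n) :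
    ‖x j‖ = ‖x i‖ ∧ x j ^ k = x i ^ k := by
  refine hconn.forall_of_forall_mem_edge (P := fun j => ‖x j‖ = ‖x i‖ ∧ x j ^ k = x i ^ k)
    ?_ ⟨rfl, rfl⟩ j
  rintro e he a ha ⟨haM, hak⟩ b hb
  have hprod {c : Fin n} (hc : c ∈ e) (hcM : ‖x c‖ = ‖x i‖) : ∏ j ∈ e, x j = x c ^ k :=
    prod_eq_pow_of_lapC_eq_zero hE (hlap c) (fun j => (hmax j).trans_eq hcM.symm)
      (norm_ne_zero_iff.1 (hcM.trans_ne (norm_ne_zero_iff.2 hx))) he hc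
  have hbM : ‖x b‖ = ‖x i‖ := norm_eq_of_norm_prod_eq_pow_card (norm_pos_iff.2 hx)
    (fun j _ => hmax j) (by rw [hprod ha haM, norm_pow, haM, hE e he]) hb
  exact ⟨hbM, by rw [← hprod hb hbM, hprod ha haM, hak]⟩

end Laplacian

theorem stmt_4_general {n k : ℕ} (hk : 3 ≤ k) (hn : k ≤ n)
    (E : Finset (Finset (Fin n))) (hE : ∀ e ∈ E, e.card = k)
    (hconn : HConnected E)
    (x : Fin n → ℂ) :
    (x ≠ 0 ∧ ∀ i, lapC k E x i = 0) ↔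
      ∃ γ : ℂ, γ ≠ 0 ∧ ∃ α : Fin n → ℤ,
        (∀ i, x i = γ * Complex.exp (2 * Real.pi * (α i : ℂ) * Complex.I / k)) ∧
        (∀ e ∈ E, (k : ℤ) ∣ ∑ j ∈ e, α j) := by
  have hk0 : k ≠ 0 := by omega
  constructor
  · rintro ⟨hx, hlap⟩
    have : Nonempty (Fin n) := ⟨⟨0, by omega⟩⟩
    obtain ⟨i₀, hmax⟩ := Finite.exists_max fun j => ‖x j‖
    obtain ⟨i, hi⟩ := Function.ne_iff.1 hx
    have hγ : x i₀ ≠ 0 := norm_pos_iff.1 ((norm_pos_iff.2 hi).trans_le (hmax i))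
    have hroot := norm_eq_and_pow_eq_of_lapC_eq_zero hE hconn hlap hmax hγ
    choose α hα using fun j => exists_eq_mul_exp_of_pow_eq_pow hk0 hγ (hroot j).2
    refine ⟨x i₀, hγ, α, hα, fun e he => ?_⟩
    obtain ⟨i, hi⟩ : e.Nonempty := card_pos.1 (by rw [hE e he]; omega)
    have hprod := prod_eq_pow_of_lapC_eq_zero hE (hlap i)
      (fun j => (hmax j).trans_eq (hroot i).1.symm)
      (norm_ne_zero_iff.1 ((hroot i).1.trans_ne (norm_ne_zero_iff.2 hγ))) he hi
    rw [prod_congr rfl fun j _ => hα j, prod_mul_exp_two_pi_int_mul_I_div, hE e he,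
      (hroot i).2] at hprod
    exact (exp_two_pi_int_mul_I_div_eq_one_iff hk0 _).1
      (mul_left_cancel₀ (pow_ne_zero k hγ) (hprod.trans (mul_one _).symm))
  · rintro ⟨γ, hγ, α, hα, hdvd⟩
    have hx : ∀ j, x j ≠ 0 := fun j => hα j ▸ mul_ne_zero hγ (exp_ne_zero _)
    refine ⟨fun h => hx ⟨0, by omega⟩ (congrFun h _),
      fun i => lapC_eq_zero_of_prod_erase fun e he hi => ?_⟩
    rw [← hE e he, prod_erase_eq_pow_iff hi (hx i), prod_congr rfl fun j _ => hα j,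
      prod_mul_exp_two_pi_int_mul_I_div, (exp_two_pi_int_mul_I_div_eq_one_iff hk0 _).2 (hdvd e he),
      hα i, mul_pow, hE e he, exp_two_pi_int_mul_I_div_pow hk0, mul_one]

theorem stmt_4 {n k : ℕ} (hk : 3 ≤ k) (hn : k ≤ n)
    (E : Finset (Finset (Fin n))) (hE : ∀ e ∈ E, e.card = k)
    (hconn : HConnected E) (hne : E.Nonempty)
    (x : Fin n → ℂ) :
    (x ≠ 0 ∧ ∀ i, lapC k E x i = 0) ↔
      ∃ γ : ℂ, γ ≠ 0 ∧ ∃ α : Fin n → ℤ,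
        (∀ i, x i = γ * Complex.exp (2 * Real.pi * (α i : ℂ) * Complex.I / k)) ∧
        (∀ e ∈ E, (k : ℤ) ∣ ∑ j ∈ e, α j) :=
  stmt_4_general hk hn E hE hconn x
end

section
/- Let G be a connected k-uniform hypergraph on {1,…,n} with at least one edge. A nonzero vector x ∈ ℂ^n satisfies ((D+A) x^{k−1})_i = 0 for all i if and only if there exist a nonzero γ ∈ ℂ and integers α_1,…,α_n such that x_i = γ·exp(2πα_i√(−1)/k) for all i, and for every edge e ∈ E there is an integer σ_e with 2·Σ_{j∈e} α_j = 2σ_e·k + k (equivalently, 2·Σ_{j∈e} α_j ≡ k (mod 2k)). -/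
/-!
Let `M` be the largest modulus `‖x i‖`. At a vertex `i` with `‖x i‖ = M` the equation says that
the `d_i` products `∏_{j ∈ e ∖ i} x j`, each of modulus at most `M^(k-1)`, sum to
`-d_i x_i^(k-1)`, of modulus `d_i M^(k-1)`; equality in the triangle inequality forces each
product to equal `-x_i^(k-1)` and every vertex of those edges to have modulus `M`. By
connectivity all moduli are `M`, so `∏_{j ∈ e} x j = -x_i^k` for every edge `e ∋ i`. Then `x_i^k`
is constant along edges, hence constant, so `x i = γ ζ^(α i)` with `ζ = exp (2π√-1/k)`, and the
edge condition reads `ζ^(∑_{j ∈ e} α j) = -1`. The converse is the same computation backwards.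
-/

open Finset

open Complex
open scoped Real

theorem eq_of_sum_eq_card_nsmul_of_norm_le {ι F : Type*} [NormedAddCommGroup F]
    [InnerProductSpace ℝ F] {s : Finset ι} {f : ι → F} {c : F} (hle : ∀ a ∈ s, ‖f a‖ ≤ ‖c‖)
    (hsum : ∑ a ∈ s, f a = s.card • c) : ∀ a ∈ s, f a = c := by
  have hinner_le : ∀ a ∈ s, inner ℝ (f a) c ≤ ‖c‖ ^ 2 := fun a ha =>
    (real_inner_le_norm _ _).trans (by nlinarith [hle a ha, norm_nonneg c])
  have hinner_sum : ∑ a ∈ s, inner ℝ (f a) c = ∑ _a ∈ s, ‖c‖ ^ 2 := by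
    rw [← sum_inner, hsum, sum_const, inner_smul_left_eq_smul, real_inner_self_eq_norm_sq]
  intro a ha
  have hinner := (sum_eq_sum_iff_of_le hinner_le).1 hinner_sum a ha
  have hsub : ‖f a - c‖ ^ 2 ≤ 0 := by
    rw [norm_sub_sq_real, hinner]
    nlinarith [hle a ha, norm_nonneg (f a)]
  exact sub_eq_zero.1 (norm_eq_zero.1 (by nlinarith [norm_nonneg (f a - c)]))

theorem eq_of_prod_eq_pow_card_of_le {ι : Type*} [DecidableEq ι] {s : Finset ι} {a : ι → ℝ}
    {M : ℝ}
    (hM : 0 < M) (h0 : ∀ j ∈ s, 0 ≤ a j) (hle : ∀ j ∈ s, a j ≤ M)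
    (hprod : ∏ j ∈ s, a j = M ^ s.card) : ∀ j ∈ s, a j = M := by
  intro j hj
  refine le_antisymm (hle j hj) ?_
  have hrest : ∏ l ∈ s.erase j, a l ≤ M ^ (s.card - 1) := by
    rw [← card_erase_of_mem hj, ← prod_const]
    exact prod_le_prod (fun l hl => h0 l (mem_of_mem_erase hl))
      fun l hl => hle l (mem_of_mem_erase hl)
  have key : M ^ (s.card - 1) * M ≤ M ^ (s.card - 1) * a j := by
    rw [pow_sub_one_mul (card_ne_zero_of_mem hj), ← hprod, ← mul_prod_erase s a hj, mul_comm (a j)]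
    exact mul_le_mul_of_nonneg_right hrest (h0 j hj)
  exact le_of_mul_le_mul_left key (pow_pos hM _)

theorem HConnected.forall_of_edge_invariant {n : ℕ} {E : Finset (Finset (Fin n))}
    (hconn : HConnected E) {P : Fin n → Prop} (hP : ∀ e ∈ E, ∀ u ∈ e, ∀ v ∈ e, P u → P v)
    {i : Fin n} (hi : P i) (j : Fin n) : P j := by
  rcases eq_or_ne i j with rfl | hij
  · exact hi
  obtain ⟨m, es, hes, hi0, hjm, hinter⟩ := hconn i j hij
  suffices h : ∀ r, ∀ v ∈ es r, P v from h _ j hjm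
  intro r
  induction r using Fin.induction with
  | zero => exact fun v hv => hP _ (hes 0) i hi0 v hv hi
  | succ r ih =>
    obtain ⟨w, hw⟩ := hinter r
    rw [mem_inter] at hw
    exact fun v hv => hP _ (hes r.succ) w hw.2 v hv (ih w hw.1)

section RootsOfUnity

variable {k : ℕ}

theorem exists_int_eq_mul_exp_of_pow_eq_pow (hk : k ≠ 0) {y γ : ℂ} (hγ : γ ≠ 0)
    (h : y ^ k = γ ^ k) : ∃ a : ℤ, y = γ * exp (2 * π * a * I / k) := by
  have hpow : (y / γ) ^ k = 1 := by rw [div_pow, h, div_self (pow_ne_zero k hγ)]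
  have : NeZero k := ⟨hk⟩
  obtain ⟨a, -, ha⟩ := (isPrimitiveRoot_exp k hk).eq_pow_of_pow_eq_one hpow
  refine ⟨a, ?_⟩
  rw [← exp_nat_mul] at ha
  rw [show 2 * π * ((a : ℤ) : ℂ) * I / k = a * (2 * π * I / k) by push_cast; ring, ha,
    mul_div_cancel₀ _ hγ]

theorem mul_exp_pow_eq_pow (hk : k ≠ 0) (γ : ℂ) (a : ℤ) :
    (γ * exp (2 * π * a * I / k)) ^ k = γ ^ k := by
  have hk' : (k : ℂ) ≠ 0 := Nat.cast_ne_zero.2 hk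
  rw [mul_pow, ← exp_nat_mul, show (k : ℂ) * (2 * π * a * I / k) = a * (2 * π * I) by
    field_simp, exp_int_mul_two_pi_mul_I, mul_one]

theorem prod_mul_exp {ι : Type*} (s : Finset ι) (γ : ℂ) (α : ι → ℤ) :
    ∏ j ∈ s, γ * exp (2 * π * α j * I / k) =
      γ ^ s.card * exp (2 * π * ↑(∑ j ∈ s, α j) * I / k) := by
  rw [prod_mul_distrib, prod_const, ← exp_sum, Int.cast_sum]
  simp only [mul_sum, sum_mul, sum_div]

theorem exp_two_pi_mul_div_eq_neg_one_iff (hk : k ≠ 0) (s : ℤ) :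
    exp (2 * π * s * I / k) = -1 ↔ ∃ σ : ℤ, 2 * s = 2 * σ * k + k := by
  have hk' : (k : ℂ) ≠ 0 := Nat.cast_ne_zero.2 hk
  have hπI : (π : ℂ) * I ≠ 0 := mul_ne_zero (ofReal_ne_zero.2 Real.pi_ne_zero) I_ne_zero
  rw [← exp_pi_mul_I, exp_eq_exp_iff_exists_int]
  refine exists_congr fun σ => ?_
  rw [div_eq_iff hk']
  constructor
  · intro h
    have : (π * I) * ((2 * s : ℤ) : ℂ) = (π * I) * ((2 * σ * k + k : ℤ) : ℂ) := by
      push_cast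
      linear_combination h
    exact_mod_cast mul_left_cancel₀ hπI this
  · intro h
    have : ((2 * s : ℤ) : ℂ) = ((2 * σ * k + k : ℤ) : ℂ) := by rw [h]
    push_cast at this
    linear_combination (π * I) * this

end RootsOfUnity

theorem prod_eq_neg_pow_iff_prod_erase {ι K : Type*} [DecidableEq ι] [Field K] {k : ℕ}
    (hk : k ≠ 0) {s : Finset ι} {x : ι → K} {i : ι} (hi : i ∈ s) (hxi : x i ≠ 0) :
    ∏ j ∈ s, x j = -x i ^ k ↔ ∏ j ∈ s.erase i, x j = -x i ^ (k - 1) := by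
  rw [← mul_prod_erase s x hi, ← Nat.sub_one_add_one hk, pow_succ', Nat.add_sub_cancel, ← mul_neg,
    mul_right_inj' hxi]

section SignlessLaplacian

variable {n k : ℕ} {E : Finset (Finset (Fin n))} {x : Fin n → ℂ}

theorem slapC_eq_zero_of_prod_erase {i : Fin n}
    (hi : ∀ e ∈ E, i ∈ e → ∏ j ∈ e.erase i, x j = -x i ^ (k - 1)) : slapC k E x i = 0 := by
  rw [slapC, sum_congr rfl fun e he => hi e (mem_filter.1 he).1 (mem_filter.1 he).2, sum_const,
    hdeg, nsmul_eq_mul]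
  ring

theorem prod_erase_eq_neg_pow_of_norm_le (hE : ∀ e ∈ E, e.card = k) {i : Fin n}
    (hmax : ∀ j, ‖x j‖ ≤ ‖x i‖) (hi : slapC k E x i = 0) {e : Finset (Fin n)} (he : e ∈ E)
    (hie : i ∈ e) : ∏ j ∈ e.erase i, x j = -x i ^ (k - 1) := by
  have hsum : ∑ e ∈ E.filter (i ∈ ·), ∏ j ∈ e.erase i, x j =
      (E.filter (i ∈ ·)).card • -x i ^ (k - 1) := by
    rw [slapC, hdeg] at hi
    rw [nsmul_eq_mul]
    linear_combination hi
  refine eq_of_sum_eq_card_nsmul_of_norm_le (fun e he => ?_) hsum e (mem_filter.2 ⟨he, hie⟩)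
  obtain ⟨he, hie⟩ := mem_filter.1 he
  rw [norm_prod, norm_neg, norm_pow, ← hE e he, ← card_erase_of_mem hie, ← prod_const]
  exact prod_le_prod (fun _ _ => norm_nonneg _) fun j _ => hmax j

theorem norm_eq_of_mem_edge_of_norm_le (hE : ∀ e ∈ E, e.card = k) {u v : Fin n}
    (hmax : ∀ j, ‖x j‖ ≤ ‖x u‖) (hpos : 0 < ‖x u‖) (hu : slapC k E x u = 0)
    {e : Finset (Fin n)} (he : e ∈ E) (hue : u ∈ e) (hve : v ∈ e) : ‖x v‖ = ‖x u‖ := by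
  rcases eq_or_ne v u with rfl | hvu
  · rfl
  have hnorm := congrArg norm (prod_erase_eq_neg_pow_of_norm_le hE hmax hu he hue)
  rw [norm_prod, norm_neg, norm_pow, ← hE e he, ← card_erase_of_mem hue] at hnorm
  exact eq_of_prod_eq_pow_card_of_le hpos (fun _ _ => norm_nonneg _) (fun j _ => hmax j) hnorm v
    (mem_erase.2 ⟨hvu, hve⟩)

theorem forall_ne_zero_and_prod_of_slapC_eq_zero (hk : k ≠ 0) (hE : ∀ e ∈ E, e.card = k)
    (hconn : HConnected E) (hx0 : x ≠ 0) (hx : ∀ i, slapC k E x i = 0) :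
    (∀ i, x i ≠ 0) ∧ ∀ e ∈ E, ∀ i ∈ e, ∏ j ∈ e, x j = -x i ^ k := by
  obtain ⟨i₀, hi₀⟩ := Function.ne_iff.1 hx0
  obtain ⟨i, -, hmax⟩ := exists_max_image univ (fun j => ‖x j‖) ⟨i₀, mem_univ _⟩
  have hpos : 0 < ‖x i‖ := (norm_pos_iff.2 hi₀).trans_le (hmax i₀ (mem_univ _))
  have hnorm : ∀ j, ‖x j‖ = ‖x i‖ := hconn.forall_of_edge_invariant
    (fun e he u hue v hve (hu : ‖x u‖ = ‖x i‖) => by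
      rw [← hu] at hpos hmax ⊢
      exact norm_eq_of_mem_edge_of_norm_le hE (fun j => hmax j (mem_univ _)) hpos (hx u) he hue hve)
    rfl
  have hne : ∀ j, x j ≠ 0 := fun j => norm_pos_iff.1 ((hnorm j).symm ▸ hpos)
  refine ⟨hne, fun e he j hj => (prod_eq_neg_pow_iff_prod_erase hk hj (hne j)).2 ?_⟩
  exact prod_erase_eq_neg_pow_of_norm_le hE (fun l => ((hnorm l).trans (hnorm j).symm).le) (hx j)
    he hj

theorem ne_zero_and_slapC_eq_zero_iff [Nonempty (Fin n)] (hk : k ≠ 0)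
    (hE : ∀ e ∈ E, e.card = k) (hconn : HConnected E) :
    (x ≠ 0 ∧ ∀ i, slapC k E x i = 0) ↔
      (∀ i, x i ≠ 0) ∧ ∀ e ∈ E, ∀ i ∈ e, ∏ j ∈ e, x j = -x i ^ k := by
  refine ⟨fun ⟨hx0, hx⟩ => forall_ne_zero_and_prod_of_slapC_eq_zero hk hE hconn hx0 hx,
    fun ⟨hne, hprod⟩ => ⟨fun h => hne (Classical.arbitrary _) (congrFun h _), fun i => ?_⟩⟩
  exact slapC_eq_zero_of_prod_erase fun e he hie =>
    (prod_eq_neg_pow_iff_prod_erase hk hie (hne i)).1 (hprod e he i hie)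

theorem forall_ne_zero_and_prod_iff_exists_exp [Nonempty (Fin n)] (hk : k ≠ 0)
    (hE : ∀ e ∈ E, e.card = k) (hconn : HConnected E) :
    ((∀ i, x i ≠ 0) ∧ ∀ e ∈ E, ∀ i ∈ e, ∏ j ∈ e, x j = -x i ^ k) ↔
      ∃ γ : ℂ, γ ≠ 0 ∧ ∃ α : Fin n → ℤ,
        (∀ i, x i = γ * exp (2 * π * (α i : ℂ) * I / k)) ∧
        ∀ e ∈ E, ∃ σ : ℤ, 2 * ∑ j ∈ e, α j = 2 * σ * k + k := by
  constructor
  · rintro ⟨hne, hprod⟩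
    obtain ⟨i₀⟩ := ‹Nonempty (Fin n)›
    have hpow : ∀ j, x j ^ k = x i₀ ^ k := hconn.forall_of_edge_invariant
      (fun e he u hue v hve (hu : x u ^ k = x i₀ ^ k) => by
        rw [← hu, ← neg_inj, ← hprod e he u hue, hprod e he v hve]) rfl
    choose α hα using fun j => exists_int_eq_mul_exp_of_pow_eq_pow hk (hne i₀) (hpow j)
    refine ⟨x i₀, hne i₀, α, hα, fun e he => ?_⟩
    obtain ⟨j, hj⟩ := card_pos.1 (hE e he ▸ Nat.pos_of_ne_zero hk)
    have h := hprod e he j hj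
    rw [prod_congr rfl fun j _ => hα j, prod_mul_exp, hE e he, hpow j, ← mul_neg_one] at h
    exact (exp_two_pi_mul_div_eq_neg_one_iff hk _).1 (mul_left_cancel₀ (pow_ne_zero k (hne i₀)) h)
  · rintro ⟨γ, hγ, α, hα, hσ⟩
    refine ⟨fun i => by rw [hα i]; exact mul_ne_zero hγ (exp_ne_zero _), fun e he i _ => ?_⟩
    rw [prod_congr rfl fun j _ => hα j, prod_mul_exp, hE e he, hα i, mul_exp_pow_eq_pow hk,
      (exp_two_pi_mul_div_eq_neg_one_iff hk _).2 (hσ e he), mul_neg_one]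

end SignlessLaplacian

theorem stmt_5_general {n k : ℕ} (hk : 3 ≤ k)
    (E : Finset (Finset (Fin n))) (hE : ∀ e ∈ E, e.card = k)
    (hconn : HConnected E) (hne : E.Nonempty)
    (x : Fin n → ℂ) :
    (x ≠ 0 ∧ ∀ i, slapC k E x i = 0) ↔
      ∃ γ : ℂ, γ ≠ 0 ∧ ∃ α : Fin n → ℤ,
        (∀ i, x i = γ * Complex.exp (2 * Real.pi * (α i : ℂ) * Complex.I / k)) ∧
        (∀ e ∈ E, ∃ σ : ℤ, 2 * ∑ j ∈ e, α j = 2 * σ * k + k) := by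
  have hk₀ : k ≠ 0 := by omega
  obtain ⟨e, he⟩ := hne
  obtain ⟨i, -⟩ := card_pos.1 (hE e he ▸ Nat.pos_of_ne_zero hk₀)
  have : Nonempty (Fin n) := ⟨i⟩
  exact (ne_zero_and_slapC_eq_zero_iff hk₀ hE hconn).trans
    (forall_ne_zero_and_prod_iff_exists_exp hk₀ hE hconn)

theorem stmt_5 {n k : ℕ} (hk : 3 ≤ k) (hn : k ≤ n)
    (E : Finset (Finset (Fin n))) (hE : ∀ e ∈ E, e.card = k)
    (hconn : HConnected E) (hne : E.Nonempty)
    (x : Fin n → ℂ) :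
    (x ≠ 0 ∧ ∀ i, slapC k E x i = 0) ↔
      ∃ γ : ℂ, γ ≠ 0 ∧ ∃ α : Fin n → ℤ,
        (∀ i, x i = γ * Complex.exp (2 * Real.pi * (α i : ℂ) * Complex.I / k)) ∧
        (∀ e ∈ E, ∃ σ : ℤ, 2 * ∑ j ∈ e, α j = 2 * σ * k + k) :=
  stmt_5_general hk E hE hconn hne x
end

section
/- Let G be a connected k-uniform hypergraph on {1,…,n} with at least one edge, and let x ∈ ℝ^n be a nonzero real vector satisfying ((D−A) x^{k−1})_i = 0 for all i. Then there exists a nonzero real number γ such that x_i ∈ {γ, −γ} for every i; in particular all components of x are nonzero and have the same absolute value. -/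
open Finset

lemma prod_max_lemma {α : Type*} [DecidableEq α] {M : ℝ} (hM : 0 < M) :
    ∀ (s : Finset α) (f : α → ℝ), (∀ j ∈ s, 0 ≤ f j) → (∀ j ∈ s, f j ≤ M) →
      ∏ j ∈ s, f j = M ^ s.card → ∀ j ∈ s, f j = M := by
  intro s
  induction s using Finset.induction_on with
  | empty => intro f _ _ _ j hj; simp at hj
  | @insert a s ha ih =>
    intro f h0 hle hprod j hj
    rw [Finset.prod_insert ha, Finset.card_insert_of_notMem ha, pow_succ] at hprod
    have hps : ∏ j ∈ s, f j ≤ M ^ s.card := by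
      calc ∏ j ∈ s, f j ≤ ∏ _j ∈ s, M :=
            Finset.prod_le_prod (fun j hj => h0 j (Finset.mem_insert_of_mem hj))
              (fun j hj => hle j (Finset.mem_insert_of_mem hj))
        _ = M ^ s.card := by rw [Finset.prod_const]
    have hpnn : 0 ≤ ∏ j ∈ s, f j :=
      Finset.prod_nonneg fun j hj => h0 j (Finset.mem_insert_of_mem hj)
    have hfa0 : 0 ≤ f a := h0 a (Finset.mem_insert_self a s)
    have hfaM : f a ≤ M := hle a (Finset.mem_insert_self a s)
    have hMc : (0:ℝ) < M ^ s.card := pow_pos hM s.card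
    have hfa : f a = M := by nlinarith [mul_le_mul_of_nonneg_left hps hfa0]
    have hrest : ∏ j ∈ s, f j = M ^ s.card := by
      have : M * (∏ j ∈ s, f j) = M * M ^ s.card := by rw [hfa] at hprod; linarith
      exact mul_left_cancel₀ (ne_of_gt hM) this
    rcases Finset.mem_insert.mp hj with h | h
    · rw [h]; exact hfa
    · exact ih f (fun j hj => h0 j (Finset.mem_insert_of_mem hj))
        (fun j hj => hle j (Finset.mem_insert_of_mem hj)) hrest j h

theorem stmt_7 {n k : ℕ} (hk : 3 ≤ k) (hn : k ≤ n)
    (E : Finset (Finset (Fin n))) (hE : ∀ e ∈ E, e.card = k)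
    (hconn : HConnected E) (hne : E.Nonempty)
    (x : Fin n → ℝ) (hx : x ≠ 0)
    (heig : ∀ i, lapR k E x i = 0) :
    ∃ γ : ℝ, γ ≠ 0 ∧ ∀ i, x i = γ ∨ x i = -γ := by
  have hn0 : 0 < n := lt_of_lt_of_le (by omega) hn
  have hne' : (Finset.univ : Finset (Fin n)).Nonempty := ⟨⟨0, hn0⟩, Finset.mem_univ _⟩
  set M := Finset.univ.sup' hne' (fun i => |x i|) with hMdef
  have hub : ∀ i, |x i| ≤ M := by
    intro i
    rw [hMdef]
    exact Finset.le_sup' (fun j => |x j|) (Finset.mem_univ i)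
  have hMpos : 0 < M := by
    obtain ⟨i, hi⟩ := Function.ne_iff.mp hx
    exact lt_of_lt_of_le (abs_pos.mpr hi) (hub i)
  -- edge propagation lemma
  have edge : ∀ i e, e ∈ E → i ∈ e → |x i| = M → ∀ j ∈ e, |x j| = M := by
    intro i e heE hie hxi
    set F := E.filter (fun e => i ∈ e) with hF
    have heF : e ∈ F := Finset.mem_filter.mpr ⟨heE, hie⟩
    have hcard : ∀ e' ∈ F, (e'.erase i).card = k - 1 := by
      intro e' he'
      rw [Finset.mem_filter] at he'
      rw [Finset.card_erase_of_mem he'.2, hE e' he'.1]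
    have hdF : (hdeg E i : ℝ) = (F.card : ℝ) := by rw [hdeg]
    have hsum : ∑ e' ∈ F, ∏ j ∈ e'.erase i, x j = (hdeg E i : ℝ) * x i ^ (k-1) := by
      have h := heig i
      unfold lapR at h
      rw [← hF] at h
      linarith
    have hle1 : ∀ e' ∈ F, ∏ j ∈ e'.erase i, |x j| ≤ M ^ (k-1) := by
      intro e' he'
      calc ∏ j ∈ e'.erase i, |x j| ≤ ∏ _j ∈ e'.erase i, M :=
            Finset.prod_le_prod (fun j _ => abs_nonneg _) (fun j _ => hub j)
        _ = M ^ (k-1) := by rw [Finset.prod_const, hcard e' he']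
    have hgeq : ∑ _e' ∈ F, M ^ (k-1) ≤ ∑ e' ∈ F, ∏ j ∈ e'.erase i, |x j| := by
      have h1 : (F.card : ℝ) * M ^ (k-1) = |(hdeg E i : ℝ) * x i ^ (k-1)| := by
        rw [abs_mul, abs_pow, hxi, Nat.abs_cast, hdF]
      calc ∑ _e' ∈ F, M ^ (k-1) = (F.card : ℝ) * M ^ (k-1) := by
            rw [Finset.sum_const, nsmul_eq_mul]
        _ = |(hdeg E i : ℝ) * x i ^ (k-1)| := h1
        _ = |∑ e' ∈ F, ∏ j ∈ e'.erase i, x j| := by rw [hsum]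
        _ ≤ ∑ e' ∈ F, |∏ j ∈ e'.erase i, x j| := Finset.abs_sum_le_sum_abs _ _
        _ = ∑ e' ∈ F, ∏ j ∈ e'.erase i, |x j| := by
            refine Finset.sum_congr rfl fun e' _ => ?_
            rw [Finset.abs_prod]
    have heq : ∀ e' ∈ F, ∏ j ∈ e'.erase i, |x j| = M ^ (k-1) :=
      (Finset.sum_eq_sum_iff_of_le hle1).mp
        (le_antisymm (Finset.sum_le_sum hle1) hgeq)
    intro j hj
    by_cases hji : j = i
    · rw [hji]; exact hxi
    · have hjE : j ∈ e.erase i := Finset.mem_erase.mpr ⟨hji, hj⟩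
      exact prod_max_lemma hMpos (e.erase i) (fun j => |x j|)
        (fun _ _ => abs_nonneg _) (fun j _ => hub j)
        (by rw [hcard e heF]; exact heq e heF) j hjE
  obtain ⟨i0, -, hi0⟩ := Finset.exists_mem_eq_sup' hne' (fun i => |x i|)
  have hxi0 : |x i0| = M := hi0.symm
  have hall : ∀ j, |x j| = M := by
    intro j
    by_cases hj : j = i0
    · rw [hj]; exact hxi0
    · obtain ⟨m, es, hesE, hi0e, hje, hint⟩ := hconn i0 j (Ne.symm hj)
      have key : ∀ r : Fin (m+1), ∀ v ∈ es r, |x v| = M := by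
        intro r
        induction r using Fin.induction with
        | zero => exact edge i0 (es 0) (hesE 0) hi0e hxi0
        | succ r ih =>
          obtain ⟨v, hv⟩ := hint r
          rw [Finset.mem_inter] at hv
          exact edge v (es r.succ) (hesE _) hv.2 (ih v hv.1)
      exact key (Fin.last m) j hje
  refine ⟨M, ne_of_gt hMpos, fun i => ?_⟩
  rcases (abs_eq (le_of_lt hMpos)).mp (hall i) with h | h
  · exact Or.inl h
  · exact Or.inr h
end

section
/- Let G be a connected k-uniform hypergraph on {1,…,n} with at least one edge, and let x ∈ ℝ^n be a nonzero real vector satisfying ((D+A) x^{k−1})_i = 0 for all i. Then there exists a nonzero real number γ such that x_i ∈ {γ, −γ} for every i; in particular all components of x are nonzero and have the same absolute value. -/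
open Finset

/-
Let `M = max |x_i| > 0`. At a vertex `v` with `|x_v| = M` the eigen-equation reads
`d_v x_v^{k-1} = -∑_{e ∋ v} ∏_{j ∈ e \ v} x_j`; the left side has absolute value `d_v M^{k-1}`,
while each of the `d_v` products has absolute value at most `M^{k-1}`. Hence every product attains
the bound, so every vertex of every edge through `v` has `|x| = M`. By connectivity this spreads
to all vertices, so `x_i = ±M`.
-/

lemma eq_of_prod_eq_pow_card {ι R : Type*} [CommSemiring R] [LinearOrder R]
    [IsStrictOrderedRing R] {s : Finset ι} {a : ι → R} {M : R}
    (ha₀ : ∀ i ∈ s, 0 ≤ a i) (haM : ∀ i ∈ s, a i ≤ M) (hprod : ∏ i ∈ s, a i = M ^ s.card) :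
    ∀ i ∈ s, a i = M := by
  classical
  intro j hj
  by_contra hne
  have hlt : a j < M := (haM j hj).lt_of_ne hne
  have hM : 0 < M := (ha₀ j hj).trans_lt hlt
  have hrest : ∏ i ∈ s.erase j, a i ≤ M ^ (s.erase j).card := by
    calc ∏ i ∈ s.erase j, a i ≤ ∏ _i ∈ s.erase j, M :=
          prod_le_prod (fun i hi => ha₀ i (mem_of_mem_erase hi))
            (fun i hi => haM i (mem_of_mem_erase hi))
      _ = M ^ (s.erase j).card := prod_const M
  have : ∏ i ∈ s, a i < M ^ s.card := by
    calc ∏ i ∈ s, a i = a j * ∏ i ∈ s.erase j, a i := (mul_prod_erase s a hj).symm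
      _ < M * M ^ (s.erase j).card :=
          mul_lt_mul_of_lt_of_le_of_nonneg_of_pos hlt hrest (ha₀ j hj) (by positivity)
      _ = M ^ s.card := by rw [← pow_succ', card_erase_add_one hj]
  exact this.ne hprod

section Eigenvector

variable {n k : ℕ} {E : Finset (Finset (Fin n))} {x : Fin n → ℝ} {M : ℝ}

lemma prod_abs_erase_eq_pow_of_slapR_eq_zero (hE : ∀ e ∈ E, e.card = k)
    (hM : ∀ i, |x i| ≤ M) {v : Fin n} (hv : |x v| = M) (heig : slapR k E x v = 0)
    {e : Finset (Fin n)} (he : e ∈ E) (hve : v ∈ e) :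
    ∏ j ∈ e.erase v, |x j| = M ^ (k - 1) := by
  set F := E.filter (v ∈ ·)
  have hcard : ∀ f ∈ F, (f.erase v).card = k - 1 := fun f hf => by
    rw [card_erase_of_mem (mem_filter.mp hf).2, hE f (mem_filter.mp hf).1]
  have hle : ∀ f ∈ F, ∏ j ∈ f.erase v, |x j| ≤ M ^ (k - 1) := fun f hf =>
    calc ∏ j ∈ f.erase v, |x j| ≤ ∏ _j ∈ f.erase v, M :=
          prod_le_prod (fun j _ => abs_nonneg _) (fun j _ => hM j)
      _ = M ^ (k - 1) := by rw [prod_const, hcard f hf]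
  have hge : ∑ _f ∈ F, M ^ (k - 1) ≤ ∑ f ∈ F, ∏ j ∈ f.erase v, |x j| := by
    have hsum : (hdeg E v : ℝ) * x v ^ (k - 1) = -∑ f ∈ F, ∏ j ∈ f.erase v, x j := by
      rw [slapR] at heig
      linarith
    calc ∑ _f ∈ F, M ^ (k - 1) = |(hdeg E v : ℝ) * x v ^ (k - 1)| := by
          rw [sum_const, nsmul_eq_mul, abs_mul, abs_pow, hv, Nat.abs_cast, hdeg]
      _ = |∑ f ∈ F, ∏ j ∈ f.erase v, x j| := by rw [hsum, abs_neg]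
      _ ≤ ∑ f ∈ F, |∏ j ∈ f.erase v, x j| := abs_sum_le_sum_abs _ _
      _ = ∑ f ∈ F, ∏ j ∈ f.erase v, |x j| := sum_congr rfl fun f _ => abs_prod _ _
  exact (sum_eq_sum_iff_of_le hle).mp (le_antisymm (sum_le_sum hle) hge) e
    (mem_filter.mpr ⟨he, hve⟩)

lemma abs_eq_of_mem_edge_of_slapR_eq_zero (hE : ∀ e ∈ E, e.card = k)
    (hM : ∀ i, |x i| ≤ M) {v : Fin n} (hv : |x v| = M) (heig : slapR k E x v = 0)
    {e : Finset (Fin n)} (he : e ∈ E) (hve : v ∈ e) {j : Fin n} (hj : j ∈ e) :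
    |x j| = M := by
  rcases eq_or_ne j v with rfl | hjv
  · exact hv
  have hprod := prod_abs_erase_eq_pow_of_slapR_eq_zero hE hM hv heig he hve
  rw [← hE e he, ← card_erase_of_mem hve] at hprod
  exact eq_of_prod_eq_pow_card (fun _ _ => abs_nonneg _) (fun i _ => hM i) hprod j
    (mem_erase.mpr ⟨hjv, hj⟩)

end Eigenvector

lemma HConnected.of_closed_under_edges {n : ℕ} {E : Finset (Finset (Fin n))}
    (hconn : HConnected E) {P : Fin n → Prop}
    (hP : ∀ e ∈ E, ∀ v ∈ e, P v → ∀ j ∈ e, P j)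
    {i : Fin n} (hi : P i) (j : Fin n) : P j := by
  rcases eq_or_ne i j with rfl | hij
  · exact hi
  obtain ⟨m, es, hmem, hi0, hjlast, hinter⟩ := hconn i j hij
  have hchain : ∀ r : Fin (m + 1), ∀ u ∈ es r, P u := by
    intro r
    induction r using Fin.induction with
    | zero => exact hP _ (hmem 0) i hi0 hi
    | succ r ih =>
      obtain ⟨w, hw⟩ := hinter r
      rw [mem_inter] at hw
      exact hP _ (hmem r.succ) w hw.2 (ih w hw.1)
  exact hchain (Fin.last m) j hjlast

theorem stmt_8_general {n k : ℕ}
    (E : Finset (Finset (Fin n))) (hE : ∀ e ∈ E, e.card = k)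
    (hconn : HConnected E)
    (x : Fin n → ℝ) (hx : x ≠ 0)
    (heig : ∀ i, slapR k E x i = 0) :
    ∃ γ : ℝ, γ ≠ 0 ∧ ∀ i, x i = γ ∨ x i = -γ := by
  obtain ⟨i₁, hi₁⟩ := Function.ne_iff.mp hx
  obtain ⟨i₀, -, hmax⟩ := exists_max_image univ (fun i => |x i|) ⟨i₁, mem_univ _⟩
  set M := |x i₀|
  have hM : ∀ i, |x i| ≤ M := fun i => hmax i (mem_univ i)
  have hMpos : 0 < M := (abs_pos.mpr hi₁).trans_le (hM i₁)
  have hall : ∀ i, |x i| = M :=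
    hconn.of_closed_under_edges (P := fun i => |x i| = M)
      (fun _ he _ hve hv _ hj => abs_eq_of_mem_edge_of_slapR_eq_zero hE hM hv (heig _) he hve hj)
      rfl
  exact ⟨M, hMpos.ne', fun i => (abs_eq hMpos.le).mp (hall i)⟩

theorem stmt_8 {n k : ℕ} (hk : 3 ≤ k) (hn : k ≤ n)
    (E : Finset (Finset (Fin n))) (hE : ∀ e ∈ E, e.card = k)
    (hconn : HConnected E) (hne : E.Nonempty)
    (x : Fin n → ℝ) (hx : x ≠ 0)
    (heig : ∀ i, slapR k E x i = 0) :
    ∃ γ : ℝ, γ ≠ 0 ∧ ∀ i, x i = γ ∨ x i = -γ :=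
  stmt_8_general E hE hconn x hx heig
end

section
/- Let k be even and let G be a k-uniform hypergraph on {1,…,n}. A vector x with x_i ∈ {−1, 1} for all i satisfies ((D+A) x^{k−1})_i = 0 for all i if and only if every edge e ∈ E contains an odd number of vertices j with x_j = −1 (equivalently, ∏_{j∈e} x_j = −1 for every edge e). -/
open Finset

theorem stmt_9 {n k : ℕ} (hk : 3 ≤ k) (hn : k ≤ n) (hkeven : Even k)
    (E : Finset (Finset (Fin n))) (hE : ∀ e ∈ E, e.card = k)
    (x : Fin n → ℝ) (hx : ∀ i, x i = 1 ∨ x i = -1) :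
    (∀ i, slapR k E x i = 0) ↔
      ∀ e ∈ E, Odd (e.filter fun j => x j = -1).card := by
  have hx2 : ∀ i, x i ^ 2 = 1 := by
    intro i; rcases hx i with h | h <;> simp [h]
  have hxne : ∀ i, x i ≠ 0 := by
    intro i; rcases hx i with h | h <;> simp [h]
  have hprod : ∀ e : Finset (Fin n),
      ∏ j ∈ e, x j = (-1 : ℝ) ^ (e.filter fun j => x j = -1).card := by
    intro e
    rw [← Finset.prod_filter_mul_prod_filter_not e (fun j => x j = -1)]
    rw [Finset.prod_congr rfl (fun j hj => (Finset.mem_filter.mp hj).2),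
        Finset.prod_const]
    have h1 : ∏ j ∈ e.filter (fun j => ¬ x j = -1), x j = 1 := by
      apply Finset.prod_eq_one
      intro j hj
      rcases hx j with h | h
      · exact h
      · exact absurd h (Finset.mem_filter.mp hj).2
    rw [h1, mul_one]
  have hpow : ∀ i, x i ^ (k - 1) = x i := by
    intro i
    obtain ⟨m, hm⟩ := hkeven
    have h2 : k - 1 = 2 * (m - 1) + 1 := by omega
    rw [h2, pow_succ, pow_mul, hx2, one_pow, one_mul]
  have key : ∀ i, slapR k E x i =
      x i * ∑ e ∈ E.filter (fun e => i ∈ e),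
        (1 + (-1 : ℝ) ^ (e.filter fun j => x j = -1).card) := by
    intro i
    rw [slapR, hpow, Finset.mul_sum]
    have hd : (hdeg E i : ℝ) * x i = ∑ e ∈ E.filter (fun e => i ∈ e), x i := by
      rw [Finset.sum_const, hdeg]; ring
    rw [hd, ← Finset.sum_add_distrib]
    apply Finset.sum_congr rfl
    intro e he
    have hie : i ∈ e := (Finset.mem_filter.mp he).2
    have h1 : x i * ∏ j ∈ e.erase i, x j = ∏ j ∈ e, x j :=
      Finset.mul_prod_erase e x hie
    have h2 : ∏ j ∈ e.erase i, x j = x i * ∏ j ∈ e, x j := by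
      rw [← h1, ← mul_assoc, ← sq, hx2, one_mul]
    rw [h2, hprod e]; ring
  have hterm_nonneg : ∀ m : ℕ, (0 : ℝ) ≤ 1 + (-1 : ℝ) ^ m := by
    intro m
    rcases Nat.even_or_odd m with h | h
    · rw [h.neg_one_pow]; norm_num
    · rw [h.neg_one_pow]; norm_num
  have hterm_zero : ∀ m : ℕ, (1 + (-1 : ℝ) ^ m = 0) ↔ Odd m := by
    intro m
    rcases Nat.even_or_odd m with h | h
    · rw [h.neg_one_pow]
      constructor
      · intro hc; norm_num at hc
      · intro hc; exact absurd h (Nat.not_even_iff_odd.mpr hc)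
    · rw [h.neg_one_pow]; simp [h]
  constructor
  · intro h e he
    have hcard : e.card = k := hE e he
    have hne : e.Nonempty := Finset.card_pos.mp (by omega)
    obtain ⟨i, hie⟩ := hne
    have hi := h i
    rw [key i] at hi
    have hsum : ∑ e' ∈ E.filter (fun e' => i ∈ e'),
        (1 + (-1 : ℝ) ^ (e'.filter fun j => x j = -1).card) = 0 :=
      (mul_eq_zero.mp hi).resolve_left (hxne i)
    have := (Finset.sum_eq_zero_iff_of_nonneg (fun e' _ => hterm_nonneg _)).mp hsum
      e (Finset.mem_filter.mpr ⟨he, hie⟩)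
    exact (hterm_zero _).mp this
  · intro h i
    rw [key i]
    have : ∑ e ∈ E.filter (fun e => i ∈ e),
        (1 + (-1 : ℝ) ^ (e.filter fun j => x j = -1).card) = 0 := by
      apply Finset.sum_eq_zero
      intro e he
      exact (hterm_zero _).mpr (h e (Finset.mem_filter.mp he).1)
    rw [this, mul_zero]
end

section
/- Let k be even and let G be a k-uniform hypergraph on {1,…,n}. A vector x with x_i ∈ {−1, 1} for all i satisfies ((D−A) x^{k−1})_i = 0 for all i if and only if every edge e ∈ E contains an even number of vertices j with x_j = −1 (equivalently, ∏_{j∈e} x_j = 1 for every edge e). -/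
/-!
Multiplying the `i`-th equation by `x i` (and using `x i ^ k = 1` for even `k`) turns it into
`∑_{e ∋ i} (1 - ∏_{j ∈ e} x j) = 0`. For a `±1` vector every term is `0` or `2`, so the equation
holds exactly when each edge through `i` has product `1`, i.e. an even number of entries `-1`.
-/

open Finset

section SignVector

variable {ι R : Type*} [CommRing R] [DecidableEq R] {x : ι → R}

theorem prod_eq_neg_one_pow_card_filter (hx : ∀ i, x i = 1 ∨ x i = -1) (s : Finset ι) :
    ∏ j ∈ s, x j = (-1 : R) ^ (s.filter fun j => x j = -1).card := by
  have hneg : ∏ j ∈ s.filter (fun j => x j = -1), x j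
      = (-1 : R) ^ (s.filter fun j => x j = -1).card := by
    rw [← prod_const]
    exact prod_congr rfl fun j hj => (mem_filter.mp hj).2
  have hpos : ∏ j ∈ s.filter (fun j => ¬x j = -1), x j = 1 :=
    prod_eq_one fun j hj => (hx j).resolve_right (mem_filter.mp hj).2
  rw [← prod_filter_mul_prod_filter_not s (fun j => x j = -1), hpos, mul_one, hneg]

theorem prod_eq_one_iff_even_card_filter (hx : ∀ i, x i = 1 ∨ x i = -1) (hR : (-1 : R) ≠ 1)
    (s : Finset ι) :
    ∏ j ∈ s, x j = 1 ↔ Even (s.filter fun j => x j = -1).card := by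
  rw [prod_eq_neg_one_pow_card_filter hx, neg_one_pow_eq_one_iff_even hR]

end SignVector

theorem mul_lapR_eq_sum {n k : ℕ} (hk : k ≠ 0) (E : Finset (Finset (Fin n))) (x : Fin n → ℝ)
    (i : Fin n) :
    x i * lapR k E x i = ∑ e ∈ E.filter (fun e => i ∈ e), (x i ^ k - ∏ j ∈ e, x j) := by
  have hpow : x i * x i ^ (k - 1) = x i ^ k := by
    rw [← pow_succ', Nat.sub_add_cancel (Nat.one_le_iff_ne_zero.mpr hk)]
  rw [lapR, hdeg, mul_sub, mul_sum, sum_sub_distrib, sum_const, nsmul_eq_mul, mul_left_comm,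
    hpow]
  exact congrArg _ (sum_congr rfl fun e he => mul_prod_erase e x (mem_filter.mp he).2)

theorem lapR_eq_zero_iff_forall_prod_eq_one {n k : ℕ} (hk : k ≠ 0) (hkeven : Even k)
    (E : Finset (Finset (Fin n))) {x : Fin n → ℝ} (hx : ∀ i, x i = 1 ∨ x i = -1) (i : Fin n) :
    lapR k E x i = 0 ↔ ∀ e ∈ E, i ∈ e → ∏ j ∈ e, x j = 1 := by
  have habs : ∀ j, |x j| = 1 := fun j => (abs_eq zero_le_one).mpr (hx j)
  have hxi : x i ≠ 0 := fun h => by simpa [h] using habs i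
  have hpow : x i ^ k = 1 := by rw [← hkeven.pow_abs, habs, one_pow]
  have hterm : ∀ e : Finset (Fin n), 0 ≤ 1 - ∏ j ∈ e, x j := fun e => by
    have : |∏ j ∈ e, x j| = 1 := by rw [abs_prod, prod_eq_one fun j _ => habs j]
    linarith [le_abs_self (∏ j ∈ e, x j)]
  rw [← mul_right_inj' hxi, mul_zero, mul_lapR_eq_sum hk, hpow,
    sum_eq_zero_iff_of_nonneg fun e _ => hterm e]
  simp only [mem_filter, and_imp, sub_eq_zero, eq_comm (a := (1 : ℝ))]

theorem stmt_10_general {n k : ℕ} (hk : 3 ≤ k) (hkeven : Even k)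
    (E : Finset (Finset (Fin n)))
    (x : Fin n → ℝ) (hx : ∀ i, x i = 1 ∨ x i = -1) :
    (∀ i, lapR k E x i = 0) ↔
      ∀ e ∈ E, Even (e.filter fun j => x j = -1).card := by
  simp_rw [lapR_eq_zero_iff_forall_prod_eq_one (by omega) hkeven E hx,
    ← prod_eq_one_iff_even_card_filter hx (by norm_num)]
  constructor
  · intro h e he
    rcases e.eq_empty_or_nonempty with rfl | ⟨i, hi⟩
    · exact prod_empty
    · exact h i e he hi
  · exact fun h i e he _ => h e he

theorem stmt_10 {n k : ℕ} (hk : 3 ≤ k) (hn : k ≤ n) (hkeven : Even k)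
    (E : Finset (Finset (Fin n))) (hE : ∀ e ∈ E, e.card = k)
    (x : Fin n → ℝ) (hx : ∀ i, x i = 1 ∨ x i = -1) :
    (∀ i, lapR k E x i = 0) ↔
      ∀ e ∈ E, Even (e.filter fun j => x j = -1).card :=
  stmt_10_general hk hkeven E x hx
end

section
/- Let k be even and let G be a connected k-uniform hypergraph on {1,…,n} with at least one edge. Then the signless Laplacian tensor D+A has a real eigenvector associated with the eigenvalue zero (i.e., there is a nonzero x ∈ ℝ^n with ((D+A) x^{k−1})_i = 0 for all i) if and only if G is odd-bipartite, i.e., there exists a subset S ⊆ V with S ≠ ∅ and V∖S ≠ ∅ such that |e ∩ S| is odd for every edge e ∈ E. -/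
/-!
Expanding `∑ i, x i * ((D + A) x^{k-1})_i` edge by edge gives `∑_e (∑_{j ∈ e} x_j^k + k ∏_{j ∈ e} x_j)`,
and by AM-GM every summand is nonnegative because `k` is even. At an eigenvector for `0` all summands
vanish, so an edge meeting the support of `x` has `∏_{j ∈ e} x_j < 0` and lies inside the support;
by connectivity `x` vanishes nowhere, and the negative entries of `x` meet every edge an odd number of
times. Conversely, the `±1` vector that is `-1` exactly on such a set is an eigenvector for `0`.
-/

open Finset

lemma card_mul_prod_le_sum_pow {ι : Type*} (s : Finset ι) {z : ι → ℝ} (hz : ∀ i ∈ s, 0 ≤ z i) :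
    (#s : ℝ) * ∏ i ∈ s, z i ≤ ∑ i ∈ s, z i ^ #s := by
  rcases s.eq_empty_or_nonempty with rfl | hs
  · simp
  have hcard : (0 : ℝ) < #s := by exact_mod_cast hs.card_pos
  have hroot : ∀ i ∈ s, (z i ^ #s) ^ (#s : ℝ)⁻¹ = z i := fun i hi =>
    Real.pow_rpow_inv_natCast (hz i hi) hs.card_pos.ne'
  have amgm := Real.geom_mean_le_arith_mean_weighted s (fun _ => (#s : ℝ)⁻¹) (fun i => z i ^ #s)
    (fun _ _ => by positivity) (by simp [hcard.ne']) (fun i hi => pow_nonneg (hz i hi) _)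
  rw [prod_congr rfl hroot, ← mul_sum] at amgm
  calc (#s : ℝ) * ∏ i ∈ s, z i ≤ #s * ((#s : ℝ)⁻¹ * ∑ i ∈ s, z i ^ #s) := by gcongr
    _ = ∑ i ∈ s, z i ^ #s := by field_simp

lemma sum_pow_card_add_card_mul_prod_nonneg {ι : Type*} {s : Finset ι} (hs : Even #s) (x : ι → ℝ) :
    0 ≤ ∑ j ∈ s, x j ^ #s + #s * ∏ j ∈ s, x j := by
  have amgm := card_mul_prod_le_sum_pow s (z := fun j => |x j|) fun _ _ => abs_nonneg _
  simp only [hs.pow_abs, ← abs_prod] at amgm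
  nlinarith [neg_abs_le (∏ j ∈ s, x j), (Nat.cast_nonneg #s : (0 : ℝ) ≤ #s)]

lemma prod_eq_neg_one_pow_mul_prod_abs {ι : Type*} (s : Finset ι) (x : ι → ℝ) :
    ∏ j ∈ s, x j = (-1) ^ #{j ∈ s | x j < 0} * ∏ j ∈ s, |x j| := by
  calc ∏ j ∈ s, x j = ∏ j ∈ s, (if x j < 0 then -1 else 1) * |x j| := by
        refine prod_congr rfl fun j _ => ?_
        split_ifs with h
        · rw [abs_of_neg h, neg_one_mul, neg_neg]
        · rw [abs_of_nonneg (not_lt.1 h), one_mul]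
    _ = (-1) ^ #{j ∈ s | x j < 0} * ∏ j ∈ s, |x j| := by
        rw [prod_mul_distrib, prod_ite, prod_const, prod_const_one, mul_one]

lemma odd_card_filter_neg_of_prod_neg {ι : Type*} {s : Finset ι} {x : ι → ℝ}
    (h : ∏ j ∈ s, x j < 0) : Odd #{j ∈ s | x j < 0} := by
  rw [prod_eq_neg_one_pow_mul_prod_abs] at h
  refine Nat.not_even_iff_odd.1 fun heven => ?_
  rw [heven.neg_one_pow, one_mul] at h
  exact h.not_ge (prod_nonneg fun j _ => abs_nonneg _)

lemma prod_neg_of_sum_pow_add_mul_prod_eq_zero {ι : Type*} {k : ℕ} {s : Finset ι} {x : ι → ℝ}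
    (hkeven : Even k) (h : ∑ j ∈ s, x j ^ k + k * ∏ j ∈ s, x j = 0) {i : ι} (hi : i ∈ s)
    (hxi : x i ≠ 0) : ∏ j ∈ s, x j < 0 := by
  have hsum : 0 < ∑ j ∈ s, x j ^ k :=
    (hkeven.pow_pos hxi).trans_le <|
      single_le_sum (f := fun j => x j ^ k) (fun j _ => hkeven.pow_nonneg (x j)) hi
  nlinarith [(Nat.cast_nonneg k : (0 : ℝ) ≤ k)]

lemma prod_ite_mem_neg_one_eq_neg_one {ι : Type*} [DecidableEq ι] {s S : Finset ι}
    (h : Odd #(s ∩ S)) :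
    ∏ j ∈ s, (if j ∈ S then (-1 : ℝ) else 1) = -1 := by
  rw [prod_ite_mem, prod_const, h.neg_one_pow]

section Hypergraph

variable {n k : ℕ} {E : Finset (Finset (Fin n))}

lemma HConnected.forall_of_mem_edge {P : Fin n → Prop} (hconn : HConnected E)
    (hP : ∀ e ∈ E, ∀ i ∈ e, P i → ∀ j ∈ e, P j) {i₀ : Fin n} (h₀ : P i₀) (v : Fin n) : P v := by
  rcases eq_or_ne i₀ v with rfl | hv
  · exact h₀
  obtain ⟨m, es, hesE, hi₀, hv, hmeet⟩ := hconn i₀ v hv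
  have hchain : ∀ r, ∀ j ∈ es r, P j := by
    refine Fin.induction (hP _ (hesE 0) i₀ hi₀ h₀) fun r ih => ?_
    obtain ⟨a, ha⟩ := hmeet r
    rw [mem_inter] at ha
    exact hP _ (hesE r.succ) a ha.2 (ih a ha.1)
  exact hchain _ v hv

lemma sum_mul_slapR (hk : 1 ≤ k) (hE : ∀ e ∈ E, #e = k) (x : Fin n → ℝ) :
    ∑ i, x i * slapR k E x i = ∑ e ∈ E, (∑ j ∈ e, x j ^ k + k * ∏ j ∈ e, x j) := by
  have hterm : ∀ i, x i * slapR k E x i = ∑ e ∈ E with i ∈ e, (x i ^ k + ∏ j ∈ e, x j) := by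
    intro i
    have hpow : x i * x i ^ (k - 1) = x i ^ k := by rw [← pow_succ', Nat.sub_add_cancel hk]
    rw [slapR, hdeg, sum_add_distrib, sum_const, nsmul_eq_mul, mul_add, mul_left_comm, hpow,
      mul_sum]
    congr 1
    exact sum_congr rfl fun e he => mul_prod_erase e x (mem_filter.1 he).2
  simp_rw [hterm]
  rw [sum_comm' (t' := E) (s' := id) fun i e => by simp [and_comm]]
  refine sum_congr rfl fun e he => ?_
  rw [id, sum_add_distrib, sum_const, hE e he, nsmul_eq_mul]

lemma edge_sum_eq_zero_of_slapR_eq_zero (hk : 1 ≤ k) (hkeven : Even k) (hE : ∀ e ∈ E, #e = k)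
    {x : Fin n → ℝ} (hx : ∀ i, slapR k E x i = 0) :
    ∀ e ∈ E, ∑ j ∈ e, x j ^ k + k * ∏ j ∈ e, x j = 0 := by
  have hnonneg : ∀ e ∈ E, 0 ≤ ∑ j ∈ e, x j ^ k + k * ∏ j ∈ e, x j := fun e he => by
    have h := sum_pow_card_add_card_mul_prod_nonneg ((hE e he).symm ▸ hkeven) x
    rwa [hE e he] at h
  refine (sum_eq_zero_iff_of_nonneg hnonneg).1 ?_
  simp [← sum_mul_slapR hk hE, hx]

lemma prod_neg_of_slapR_eq_zero (hk : 1 ≤ k) (hkeven : Even k) (hE : ∀ e ∈ E, #e = k)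
    (hconn : HConnected E) {x : Fin n → ℝ} (hx0 : x ≠ 0) (hx : ∀ i, slapR k E x i = 0) :
    ∀ e ∈ E, ∏ j ∈ e, x j < 0 := by
  have hedge := edge_sum_eq_zero_of_slapR_eq_zero hk hkeven hE hx
  have hne : ∀ v, x v ≠ 0 := by
    obtain ⟨i₀, hi₀⟩ := Function.ne_iff.1 hx0
    refine hconn.forall_of_mem_edge (fun e he i hi hxi j hj hxj => ?_) hi₀
    exact (prod_neg_of_sum_pow_add_mul_prod_eq_zero hkeven (hedge e he) hi hxi).ne
      (prod_eq_zero hj hxj)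
  intro e he
  obtain ⟨i, hi⟩ := card_pos.1 (hE e he ▸ hk)
  exact prod_neg_of_sum_pow_add_mul_prod_eq_zero hkeven (hedge e he) hi (hne i)

lemma exists_odd_card_inter_of_prod_neg (hkeven : Even k) (hE : ∀ e ∈ E, #e = k)
    (hne : E.Nonempty) {x : Fin n → ℝ} (hx : ∀ e ∈ E, ∏ j ∈ e, x j < 0) :
    ∃ S : Finset (Fin n), S.Nonempty ∧ Sᶜ.Nonempty ∧ ∀ e ∈ E, Odd #(e ∩ S) := by
  set S : Finset (Fin n) := {j | x j < 0}
  have hodd : ∀ e ∈ E, Odd #(e ∩ S) := fun e he => by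
    rw [inter_filter, inter_univ]
    exact odd_card_filter_neg_of_prod_neg (hx e he)
  obtain ⟨e, he⟩ := hne
  refine ⟨S, ?_, ?_, hodd⟩
  · obtain ⟨j, hj⟩ := card_pos.1 (hodd e he).pos
    exact ⟨j, (mem_inter.1 hj).2⟩
  · have hnsub : ¬e ⊆ S := fun hsub => by
      have h := hodd e he
      rw [inter_eq_left.2 hsub, hE e he] at h
      exact Nat.not_even_iff_odd.2 h hkeven
    obtain ⟨j, hj⟩ := sdiff_nonempty.2 hnsub
    exact ⟨j, mem_compl.2 (mem_sdiff.1 hj).2⟩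

lemma slapR_eq_zero_of_sq_eq_one (hk : Odd (k - 1)) {x : Fin n → ℝ} (hsq : ∀ i, x i ^ 2 = 1)
    (hprod : ∀ e ∈ E, ∏ j ∈ e, x j = -1) (i : Fin n) : slapR k E x i = 0 := by
  have hpow : x i ^ (k - 1) = x i := by
    obtain ⟨m, hm⟩ := hk
    rw [hm, pow_succ, pow_mul, hsq, one_pow, one_mul]
  have herase : ∀ e ∈ {e ∈ E | i ∈ e}, ∏ j ∈ e.erase i, x j = -x i := fun e he => by
    have h := mul_prod_erase e x (mem_filter.1 he).2
    rw [hprod e (mem_filter.1 he).1] at h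
    linear_combination x i * h - (∏ j ∈ e.erase i, x j) * hsq i
  rw [slapR, hpow, sum_congr rfl herase, sum_const, hdeg, nsmul_eq_mul]
  ring

end Hypergraph

theorem stmt_11_general {n k : ℕ} (hk : 3 ≤ k) (hkeven : Even k)
    (E : Finset (Finset (Fin n))) (hE : ∀ e ∈ E, e.card = k)
    (hconn : HConnected E) (hne : E.Nonempty) :
    (∃ x : Fin n → ℝ, x ≠ 0 ∧ ∀ i, slapR k E x i = 0) ↔
      ∃ S : Finset (Fin n), S.Nonempty ∧ Sᶜ.Nonempty ∧
        ∀ e ∈ E, Odd (e ∩ S).card := by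
  constructor
  · rintro ⟨x, hx0, hx⟩
    exact exists_odd_card_inter_of_prod_neg hkeven hE hne
      (prod_neg_of_slapR_eq_zero (by omega) hkeven hE hconn hx0 hx)
  · rintro ⟨S, ⟨i, hi⟩, -, hodd⟩
    refine ⟨fun j => if j ∈ S then -1 else 1, fun h => by simpa [hi] using congrFun h i, ?_⟩
    refine slapR_eq_zero_of_sq_eq_one (Nat.Even.sub_odd (by omega) hkeven odd_one) (fun j => ?_)
      fun e he => prod_ite_mem_neg_one_eq_neg_one (hodd e he)
    split_ifs <;> norm_num

theorem stmt_11 {n k : ℕ} (hk : 3 ≤ k) (hn : k ≤ n) (hkeven : Even k)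
    (E : Finset (Finset (Fin n))) (hE : ∀ e ∈ E, e.card = k)
    (hconn : HConnected E) (hne : E.Nonempty) :
    (∃ x : Fin n → ℝ, x ≠ 0 ∧ ∀ i, slapR k E x i = 0) ↔
      ∃ S : Finset (Fin n), S.Nonempty ∧ Sᶜ.Nonempty ∧
        ∀ e ∈ E, Odd (e ∩ S).card :=
  stmt_11_general hk hkeven E hE hconn hne
end

section
/- Let G be a 3-uniform hypergraph on {1,…,n} and let ω = exp(2π√(−1)/3). Suppose x ∈ ℂ^n satisfies x_i ∈ {1, ω, ω²} for every i. Then ((D−A) x²)_i = 0 for all i if and only if for every edge e = {a,b,c} ∈ E either x_a = x_b = x_c or the three values x_a, x_b, x_c are pairwise distinct (equivalently, x_a·x_b·x_c = 1 for every edge). -/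
/-!
Multiplying the `i`-th equation by `x i` and using `x i ^ k = 1` turns `(D - A) x^{k-1}` at `i`
into `∑_{e ∋ i} (1 - ∏_{j ∈ e} x j)`. Each product is a unit complex number, so each summand has
nonnegative real part, vanishing only when the product is `1`; hence the sum vanishes exactly
when every edge through `i` has product `1`.
-/

open Finset

theorem Complex.sum_one_sub_eq_zero_iff_of_norm_eq_one {ι : Type*} {s : Finset ι} {z : ι → ℂ}
    (hz : ∀ i ∈ s, ‖z i‖ = 1) : ∑ i ∈ s, (1 - z i) = 0 ↔ ∀ i ∈ s, z i = 1 := by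
  refine ⟨fun h i hi => ?_, fun h => sum_eq_zero fun i hi => by rw [h i hi, sub_self]⟩
  have hre : ∑ i ∈ s, (1 - (z i).re) = 0 := by simpa using congrArg Complex.re h
  have hnonneg : ∀ i ∈ s, 0 ≤ 1 - (z i).re := fun i hi =>
    sub_nonneg.2 (hz i hi ▸ Complex.re_le_norm (z i))
  have hre_eq : (z i).re = ‖z i‖ := by
    linarith [(sum_eq_zero_iff_of_nonneg hnonneg).1 hre i hi, hz i hi]
  open ComplexOrder in
  rw [Complex.eq_coe_norm_of_nonneg (Complex.re_eq_norm.1 hre_eq), hz i hi, Complex.ofReal_one]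

theorem mul_lapC_eq_sum_one_sub_prod {k n : ℕ} (hk : 0 < k) (E : Finset (Finset (Fin n)))
    {x : Fin n → ℂ} {i : Fin n} (hxi : x i ^ k = 1) :
    x i * lapC k E x i = ∑ e ∈ E.filter (fun e => i ∈ e), (1 - ∏ j ∈ e, x j) := by
  have hdiag : x i * x i ^ (k - 1) = 1 := by rw [← pow_succ', Nat.sub_add_cancel hk, hxi]
  have hoff : ∀ e ∈ E.filter (fun e => i ∈ e), x i * ∏ j ∈ e.erase i, x j = ∏ j ∈ e, x j :=
    fun e he => mul_prod_erase e x (mem_filter.1 he).2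
  rw [lapC, mul_sub, mul_sum, sum_congr rfl hoff, sum_sub_distrib, sum_const, hdeg,
    nsmul_eq_mul, mul_one, mul_left_comm, hdiag, mul_one]

theorem lapC_eq_zero_iff_forall_prod_eq_one {k n : ℕ} (hk : 0 < k) (E : Finset (Finset (Fin n)))
    {x : Fin n → ℂ} (hx : ∀ i, x i ^ k = 1) :
    (∀ i, lapC k E x i = 0) ↔ ∀ e ∈ E, ∏ j ∈ e, x j = 1 := by
  have hnorm : ∀ e : Finset (Fin n), ‖∏ j ∈ e, x j‖ = 1 := fun e => by
    rw [norm_prod, prod_eq_one fun j _ => Complex.norm_eq_one_of_pow_eq_one (hx j) hk.ne']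
  have hvertex : ∀ i, lapC k E x i = 0 ↔ ∀ e ∈ E, i ∈ e → ∏ j ∈ e, x j = 1 := fun i => by
    have hxi : x i ≠ 0 := fun h => by simpa [h, hk.ne'] using hx i
    rw [← mul_right_inj' hxi, mul_zero, mul_lapC_eq_sum_one_sub_prod hk E (hx i),
      Complex.sum_one_sub_eq_zero_iff_of_norm_eq_one fun e _ => hnorm e]
    simp only [mem_filter, and_imp]
  simp only [hvertex]
  refine ⟨fun h e he => ?_, fun h i e he _ => h e he⟩
  rcases e.eq_empty_or_nonempty with rfl | ⟨i, hi⟩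
  · exact prod_empty
  · exact h i e he hi

theorem stmt_16_general {n : ℕ}
    (E : Finset (Finset (Fin n)))
    (x : Fin n → ℂ)
    (hx : ∀ i, x i = 1 ∨ x i = Complex.exp (2 * Real.pi * Complex.I / 3) ∨
      x i = Complex.exp (2 * Real.pi * Complex.I / 3) ^ 2) :
    (∀ i, lapC 3 E x i = 0) ↔ ∀ e ∈ E, ∏ j ∈ e, x j = 1 := by
  have hω : Complex.exp (2 * Real.pi * Complex.I / 3) ^ 3 = 1 := by
    simpa using (Complex.isPrimitiveRoot_exp 3 three_ne_zero).pow_eq_one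
  refine lapC_eq_zero_iff_forall_prod_eq_one three_pos E fun i => ?_
  rcases hx i with h | h | h <;> rw [h]
  · exact one_pow 3
  · exact hω
  · rw [pow_right_comm, hω, one_pow]

theorem stmt_16 {n : ℕ} (hn : 3 ≤ n)
    (E : Finset (Finset (Fin n))) (hE : ∀ e ∈ E, e.card = 3)
    (x : Fin n → ℂ)
    (hx : ∀ i, x i = 1 ∨ x i = Complex.exp (2 * Real.pi * Complex.I / 3) ∨
      x i = Complex.exp (2 * Real.pi * Complex.I / 3) ^ 2) :
    (∀ i, lapC 3 E x i = 0) ↔ ∀ e ∈ E, ∏ j ∈ e, x j = 1 :=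
  stmt_16_general E x hx
end

section
/- Let G be a connected 3-uniform hypergraph on {1,…,n} with at least one edge, and let f : V → ℤ/3ℤ satisfy Σ_{j∈e} f(j) = 0 in ℤ/3ℤ for every edge e ∈ E. If f is not constant, then f is surjective, i.e., all three level sets f⁻¹(0), f⁻¹(1), f⁻¹(2) are nonempty. -/
/-! A non-constant `f` cannot be constant on every edge, since constancy propagates along
chains of intersecting edges. On an edge `{a, b, c}` where `f` takes two distinct values,
`f a + f b + f c = 0` forces the three values to be pairwise distinct (two equal values `x`
would make the third `-2x = x`), so they exhaust `ZMod 3`. -/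

open Finset

theorem HConnected.eq_of_forall_mem_edge {α : Type*} {n : ℕ} {E : Finset (Finset (Fin n))}
    (hconn : HConnected E) {f : Fin n → α} (hedge : ∀ e ∈ E, ∀ a ∈ e, ∀ b ∈ e, f a = f b)
    (i j : Fin n) : f i = f j := by
  obtain rfl | hij := eq_or_ne i j
  · rfl
  obtain ⟨m, es, hmem, hi, hj, hlink⟩ := hconn i j hij
  have hchain : ∀ r : Fin (m + 1), ∀ v ∈ es r, f i = f v := by
    intro r
    induction r using Fin.induction with
    | zero => exact hedge _ (hmem 0) i hi
    | succ r ih =>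
      intro v hv
      obtain ⟨w, hw⟩ := hlink r
      rw [mem_inter] at hw
      exact (ih w hw.1).trans (hedge _ (hmem r.succ) w hw.2 v hv)
  exact hchain (Fin.last m) j hj

theorem ZMod.three_eq_or_eq_or_eq_of_add_add_eq_zero {x y z : ZMod 3} (hsum : x + y + z = 0)
    (hne : ¬(x = y ∧ x = z)) (w : ZMod 3) : w = x ∨ w = y ∨ w = z := by
  revert x y z w
  decide

theorem ZMod.three_exists_mem_eq_of_sum_eq_zero {α : Type*} {e : Finset α} (he : e.card = 3)
    {f : α → ZMod 3} (hsum : ∑ j ∈ e, f j = 0) {p q : α} (hp : p ∈ e) (hq : q ∈ e)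
    (hpq : f p ≠ f q) (w : ZMod 3) : ∃ a ∈ e, f a = w := by
  classical
  obtain ⟨a, b, c, hab, hac, hbc, rfl⟩ := card_eq_three.mp he
  rw [sum_insert (by simp [hab, hac]), sum_insert (by simp [hbc]), sum_singleton,
    ← add_assoc] at hsum
  have hne : ¬(f a = f b ∧ f a = f c) := by
    rintro ⟨hb, hc⟩
    have hconst : ∀ x ∈ ({a, b, c} : Finset α), f x = f a := by
      simp only [mem_insert, mem_singleton, forall_eq_or_imp, forall_eq, true_and]
      exact ⟨hb.symm, hc.symm⟩
    exact hpq ((hconst p hp).trans (hconst q hq).symm)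
  rcases ZMod.three_eq_or_eq_or_eq_of_add_add_eq_zero hsum hne w with rfl | rfl | rfl
  exacts [⟨a, by simp⟩, ⟨b, by simp⟩, ⟨c, by simp⟩]

theorem stmt_17_general {n : ℕ}
    (E : Finset (Finset (Fin n))) (hE : ∀ e ∈ E, e.card = 3)
    (hconn : HConnected E)
    (f : Fin n → ZMod 3) (hf : ∀ e ∈ E, ∑ j ∈ e, f j = 0)
    (hnc : ¬ ∀ i j : Fin n, f i = f j) :
    Function.Surjective f := by
  have hedge : ∃ e ∈ E, ∃ p ∈ e, ∃ q ∈ e, f p ≠ f q := by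
    by_contra! hconst
    exact hnc (hconn.eq_of_forall_mem_edge hconst)
  obtain ⟨e, he, p, hp, q, hq, hpq⟩ := hedge
  intro w
  obtain ⟨a, -, ha⟩ :=
    ZMod.three_exists_mem_eq_of_sum_eq_zero (hE e he) (hf e he) hp hq hpq w
  exact ⟨a, ha⟩

theorem stmt_17 {n : ℕ} (hn : 3 ≤ n)
    (E : Finset (Finset (Fin n))) (hE : ∀ e ∈ E, e.card = 3)
    (hconn : HConnected E) (hne : E.Nonempty)
    (f : Fin n → ZMod 3) (hf : ∀ e ∈ E, ∑ j ∈ e, f j = 0)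
    (hnc : ¬ ∀ i j : Fin n, f i = f j) :
    Function.Surjective f :=
  stmt_17_general E hE hconn f hf hnc
end
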